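/- arXiv:2501.09852 — 4 statements merged into one kernel-verified Lean document; each statement's English description precedes it below -/
import Mathlib

section
/- Assume n is even, n ≥ 2, a + c ≠ 0 and a − c ≠ 0. Then f has a nonzero periodic point in F_{q^2} whose minimal period is odd if and only if a^2 − c^2 is not a square in F_q. -/
/-!
Write `σ x = x ^ q` for the Frobenius of `F_{q^2}` over `F_q`. Since `n - 1` is odd, one step of
`f` sends the ratio `U = σ X / X` to `T U = -(a U + c) / (c U + a)`, and `T` is an involution
because `a ^ 2 ≠ c ^ 2`. So a nonzero point of odd period gives a fixed point `U ≠ 1` of `T` with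
`σ U * U = 1`. Then `(c U + a) ^ 2 = a ^ 2 - c ^ 2`; a square root of `a ^ 2 - c ^ 2` in `F_q`
would put `c U + a`, hence `U`, in `F_q`, forcing `U = ± 1`; but `U = 1` makes `f X = 0`, and
`U = -1` forces `a = c`.

Conversely, if `a ^ 2 - c ^ 2 = δ ^ 2` with `δ ∉ F_q`, then `U = (δ - a) / c` is such a fixed
point. By Hilbert 90, `U = σ X₀ / X₀`, and on the line `F_q X₀` the map `f` becomes
`w ↦ μ w ^ n` with `μ ∈ F_qˣ`. For `M` the odd part of `q - 1`, lifting the exponent shows that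
`gcd (n ^ M - 1) (q - 1)` divides `1 + n + ⋯ + n ^ (M - 1)`, which is exactly what is needed to
find `λ ∈ F_qˣ` with `f^[M] (λ X₀) = λ X₀`.
-/

open Finset Function

theorem Function.IsPeriodicPt.iterate_ne_of_isFixedPt {α : Type*} {f : α → α} {x z : α} {m : ℕ}
    (hx : IsPeriodicPt f m x) (hm : 0 < m) (hz : IsFixedPt f z) (hxz : x ≠ z) (j : ℕ) :
    f^[j] x ≠ z := by
  intro hj
  apply hxz
  have hjm : m * j - j + j = m * j := Nat.sub_add_cancel (Nat.le_mul_of_pos_left j hm)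
  rw [← (hx.mul_const j).eq, ← hjm, iterate_add_apply, hj, iterate_fixed hz]

theorem Function.iterate_apply_of_semiconjOn {α β : Type*} {f : β → β} {g : α → α} {φ : α → β}
    {s : Set α} (hs : Set.MapsTo g s s) (h : ∀ x ∈ s, f (φ x) = φ (g x)) (n : ℕ) {x : α}
    (hx : x ∈ s) : f^[n] (φ x) = φ (g^[n] x) := by
  induction n generalizing x with
  | zero => rfl
  | succ n ih => rw [iterate_succ_apply, iterate_succ_apply, h x hx, ih (hs hx)]

theorem iterate_mul_pow {M : Type*} [CommMonoid M] (μ w : M) (N j : ℕ) :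
    (fun w => μ * w ^ N)^[j] w = μ ^ (∑ i ∈ range j, N ^ i) * w ^ N ^ j := by
  induction j with
  | zero => simp
  | succ j ih =>
    rw [iterate_succ_apply', ih, geom_sum_succ, mul_pow, ← pow_mul, ← pow_mul, pow_succ N j,
      pow_add, pow_one, mul_comm N]
    ac_rfl

theorem pow_sub_one_eq_one_of_pow_eq_self {G₀ : Type*} [GroupWithZero G₀] {x : G₀} {q : ℕ}
    (hx0 : x ≠ 0) (hq : q ≠ 0) (hx : x ^ q = x) : x ^ (q - 1) = 1 := by
  rw [← mul_left_inj' hx0, ← pow_succ, Nat.sub_add_cancel (Nat.one_le_iff_ne_zero.mpr hq), hx,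
    one_mul]

theorem gcd_pow_sub_one_dvd_geom_sum {n M : ℕ} (hn : Even n) (hn0 : n ≠ 0) (hM : M ≠ 0) :
    Nat.gcd (n ^ M - 1) M ∣ ∑ i ∈ range M, n ^ i := by
  have hn2 : 2 ≤ n := by obtain ⟨r, rfl⟩ := hn; omega
  have hnM : n ≤ n ^ M := Nat.le_self_pow hM n
  have hS : (∑ i ∈ range M, n ^ i) * (n - 1) = n ^ M - 1 := by
    have := geom_sum_mul_add (n - 1) M
    rw [Nat.sub_add_cancel (by omega)] at this
    omega
  have hS0 : ∑ i ∈ range M, n ^ i ≠ 0 := by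
    rintro h; rw [h, zero_mul] at hS; omega
  have hodd : Odd (n ^ M - 1) := Nat.Even.sub_odd (by omega) (hn.pow_of_ne_zero hM) odd_one
  rw [Nat.dvd_iff_prime_pow_dvd_dvd]
  intro ℓ j hℓ hdvd
  rcases j.eq_zero_or_pos with rfl | hj
  · simp
  have hdvd₁ := hdvd.trans (Nat.gcd_dvd_left _ _)
  by_cases hℓn : ℓ ∣ n - 1
  · have := Fact.mk hℓ
    have hℓodd : Odd ℓ := by
      refine hℓ.odd_of_ne_two ?_
      rintro rfl
      exact Nat.not_even_iff_odd.mpr hodd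
        (even_iff_two_dvd.mpr ((dvd_pow_self 2 hj.ne').trans hdvd₁))
    have hℓn' : ¬ ℓ ∣ n := fun h => hℓ.one_lt.ne' (Nat.dvd_one.mp
      (by simpa [Nat.sub_sub_self (by omega : 1 ≤ n)] using Nat.dvd_sub h hℓn))
    have hLTE := padicValNat.pow_sub_pow (y := 1) hℓodd (by omega) hℓn hℓn' hM
    rw [one_pow, ← hS, padicValNat.mul hS0 (by omega)] at hLTE
    rw [padicValNat_dvd_iff_le hS0]
    have := (padicValNat_dvd_iff_le hM).mp (hdvd.trans (Nat.gcd_dvd_right _ _))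
    omega
  · exact (Nat.Coprime.pow_left j ((Nat.Prime.coprime_iff_not_dvd hℓ).mpr hℓn)).dvd_of_dvd_mul_right
      (hS ▸ hdvd₁)

theorem exists_odd_gcd_pow_sub_one_dvd_geom_sum {n m : ℕ} (hn : Even n) (hn0 : n ≠ 0)
    (hm : m ≠ 0) : ∃ M, Odd M ∧ Nat.gcd (n ^ M - 1) m ∣ ∑ i ∈ range M, n ^ i := by
  obtain ⟨e, M, hM, rfl⟩ := Nat.exists_eq_two_pow_mul_odd hm
  have hM0 : M ≠ 0 := by rintro rfl; simp at hM
  refine ⟨M, hM, (Nat.dvd_gcd (Nat.gcd_dvd_left _ _) ?_).trans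
    (gcd_pow_sub_one_dvd_geom_sum hn hn0 hM0)⟩
  have hodd : Odd (n ^ M - 1) :=
    Nat.Even.sub_odd (Nat.one_le_pow _ _ (by omega)) (hn.pow_of_ne_zero hM0) odd_one
  have : Nat.Coprime (Nat.gcd (n ^ M - 1) (2 ^ e * M)) (2 ^ e) :=
    Nat.Coprime.pow_right e ((hodd.of_dvd_nat (Nat.gcd_dvd_left _ _)).coprime_two_right)
  exact this.dvd_of_dvd_mul_left (Nat.gcd_dvd_right _ _)

theorem IsCyclic.exists_pow_eq_of_pow_eq_one {G : Type*} [CommGroup G] [IsCyclic G] [Finite G]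
    {d e : ℕ} (hde : Nat.card G = d * e) {g : G} (hg : g ^ e = 1) : ∃ x : G, x ^ d = g := by
  have hd : d ≠ 0 := by rintro rfl; exact Nat.card_pos.ne' (hde.trans (zero_mul e))
  have hle : (powMonoidHom d : G →* G).range ≤ (powMonoidHom e).ker := by
    rintro _ ⟨x, rfl⟩
    simp [← pow_mul, ← hde, pow_card_eq_one']
  have hcard :
      Nat.card (powMonoidHom e : G →* G).ker ≤ Nat.card (powMonoidHom d : G →* G).range := by
    rw [IsCyclic.card_powMonoidHom_ker, IsCyclic.card_powMonoidHom_range, hde,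
      Nat.gcd_mul_left_left, Nat.gcd_mul_right_left, Nat.mul_div_cancel_left _ hd.bot_lt]
  obtain ⟨x, hx⟩ : g ∈ (powMonoidHom d : G →* G).range :=
    (Subgroup.eq_of_le_of_card_ge hle hcard) ▸ hg
  exact ⟨x, hx⟩

theorem FiniteField.exists_pow_eq_of_pow_eq_one {K : Type*} [Field K] [Fintype K] {d e : ℕ}
    (hde : Fintype.card K - 1 = d * e) {z : K} (hz0 : z ≠ 0) (hz : z ^ e = 1) :
    ∃ x : K, x ^ d = z := by
  classical
  obtain ⟨x, hx⟩ := IsCyclic.exists_pow_eq_of_pow_eq_one (G := Kˣ)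
    (by rw [Nat.card_eq_fintype_card, Fintype.card_units, hde]) (g := Units.mk0 z hz0)
    (Units.ext (by simp [hz]))
  exact ⟨x, by simpa using congrArg Units.val hx⟩

theorem exists_zpow_fixed_of_gcd_dvd {G₀ : Type*} [GroupWithZero G₀] {μ : G₀} (hμ0 : μ ≠ 0)
    {m A S : ℕ} (hμ : μ ^ m = 1) (h : Nat.gcd A m ∣ S) :
    ∃ z : ℤ, μ ^ S * (μ ^ z) ^ (A + 1) = μ ^ z := by
  obtain ⟨x, y, hxy⟩ :=
    (Int.gcd_dvd_iff (a := A) (b := m) (n := S)).mp (by rwa [Int.gcd_natCast_natCast])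
  refine ⟨-x, ?_⟩
  calc μ ^ S * (μ ^ (-x)) ^ (A + 1) = μ ^ ((S : ℤ) - x * (A + 1)) := by
        rw [← zpow_natCast (μ ^ (-x)), ← zpow_mul, ← zpow_natCast μ S, ← zpow_add₀ hμ0]
        push_cast; ring_nf
    _ = μ ^ (-x) * (μ ^ m) ^ y := by
        rw [hxy, ← zpow_natCast, ← zpow_mul, ← zpow_add₀ hμ0]; ring_nf
    _ = μ ^ (-x) := by rw [hμ, one_zpow, mul_one]

theorem FiniteField.exists_sq_eq_of_pow_eq_self {K : Type*} [Field K] [Fintype K] {q : ℕ}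
    (hK : Fintype.card K = q ^ 2) (hq : Odd q) {z : K} (hz : z ^ q = z) : ∃ x : K, x ^ 2 = z := by
  rcases eq_or_ne z 0 with rfl | hz0
  · exact ⟨0, zero_pow two_ne_zero⟩
  obtain ⟨r, rfl⟩ := hq
  refine FiniteField.exists_pow_eq_of_pow_eq_one (e := 2 * r * (r + 1)) ?_ hz0 ?_
  · rw [hK]; ring_nf; omega
  · rw [pow_mul, show 2 * r = 2 * r + 1 - 1 by omega,
      pow_sub_one_eq_one_of_pow_eq_self hz0 (by omega) hz, one_pow]

theorem FiniteField.exists_pow_sub_one_eq_of_pow_add_one_eq_one {K : Type*} [Field K] [Fintype K]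
    {q : ℕ} (hK : Fintype.card K = q ^ 2) {u : K} (hu : u ^ (q + 1) = 1) :
    ∃ x : K, x ^ (q - 1) = u :=
  FiniteField.exists_pow_eq_of_pow_eq_one (by rw [hK, mul_comm, ← Nat.sq_sub_sq, one_pow])
    (left_ne_zero_of_mul_eq_one (by rwa [← pow_succ'])) hu

section Twisted

variable {K : Type*} [Field K] (σ : K →+* K) {a c : K} {k : ℕ}

/-- The paper's `f` is `twistedMap σ a c (n - 1)` with `σ x = x ^ q`. -/
def twistedMap (a c : K) (k : ℕ) (X : K) : K :=
  (c * σ X + a * X) * (σ X - X) ^ k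

theorem twistedMap_zero : twistedMap σ a c k 0 = 0 := by
  simp [twistedMap]

theorem twistedMap_eq_zero_of_map_eq (hk : k ≠ 0) {X : K} (hX : σ X = X) :
    twistedMap σ a c k X = 0 := by
  simp [twistedMap, hX, hk]

variable {σ}

theorem map_twistedMap (hσ : ∀ x, σ (σ x) = x) (ha : σ a = a) (hc : σ c = c) (hk : Odd k)
    (X : K) : σ (twistedMap σ a c k X) = -((c * X + a * σ X) * (σ X - X) ^ k) := by
  have h : σ (σ X - X) = -(σ X - X) := by rw [map_sub, hσ]; ring
  rw [twistedMap, map_mul, map_pow, h, hk.neg_pow, map_add, map_mul, map_mul, hσ, ha, hc]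
  ring

theorem ratio_twistedMap (hσ : ∀ x, σ (σ x) = x) (ha : σ a = a) (hc : σ c = c) (hk : Odd k)
    {X : K} (hX : X ≠ 0) (hfX : twistedMap σ a c k X ≠ 0) :
    σ (twistedMap σ a c k X) / twistedMap σ a c k X * (c * (σ X / X) + a) =
      -(a * (σ X / X) + c) := by
  have h₁ : c * σ X + a * X ≠ 0 := left_ne_zero_of_mul hfX
  have h₂ : (σ X - X) ^ k ≠ 0 := right_ne_zero_of_mul hfX
  rw [map_twistedMap hσ ha hc hk, twistedMap, show c * (σ X / X) + a = (c * σ X + a * X) / X by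
    field_simp, show a * (σ X / X) + c = (c * X + a * σ X) / X by field_simp; ring]
  rw [← neg_mul, mul_div_mul_right _ _ h₂, div_mul_div_cancel₀ h₁, neg_div]

theorem eq_of_mobius_step_step (hac : a ^ 2 ≠ c ^ 2) {u v w : K}
    (h₁ : v * (c * u + a) = -(a * u + c)) (h₂ : w * (c * v + a) = -(a * v + c)) : w = u :=
  mul_left_cancel₀ (sub_ne_zero.mpr hac)
    (by linear_combination (-(w * c) - a) * h₁ + (c * u + a) * h₂)

theorem exists_mobius_fixed_of_odd_minimalPeriod (hσ : ∀ x, σ (σ x) = x) (ha : σ a = a)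
    (hc : σ c = c) (hk : Odd k) (hac : a ^ 2 ≠ c ^ 2) {X : K} (hX : X ≠ 0)
    (hodd : Odd (minimalPeriod (twistedMap σ a c k) X)) :
    ∃ U, U * (c * U + a) = -(a * U + c) ∧ σ U * U = 1 ∧ U ≠ 1 := by
  set f := twistedMap σ a c k
  have hne : ∀ j, f^[j] X ≠ 0 :=
    (isPeriodicPt_minimalPeriod f X).iterate_ne_of_isFixedPt hodd.pos (twistedMap_zero σ) hX
  set u : ℕ → K := fun j => σ (f^[j] X) / f^[j] X
  have hstep : ∀ j, u (j + 1) * (c * u j + a) = -(a * u j + c) := fun j => by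
    have := hne (j + 1)
    rw [iterate_succ_apply'] at this
    simpa only [u, iterate_succ_apply'] using ratio_twistedMap hσ ha hc hk (hne j) this
  have hu : Periodic u 2 := fun j => eq_of_mobius_step_step hac (hstep j) (hstep (j + 1))
  have hu10 : u 1 = u 0 := by
    obtain ⟨r, hr⟩ := hodd
    calc u 1 = u (1 + r * 2) := (hu.nat_mul r 1).symm
      _ = u 0 := by
        rw [show 1 + r * 2 = minimalPeriod f X by omega]
        simp [u, iterate_minimalPeriod]
  have hσX : σ X ≠ 0 := fun h => hX (by rw [← hσ X, h, map_zero])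
  refine ⟨u 0, by simpa only [hu10] using hstep 0, ?_, ?_⟩
  · simp only [u, iterate_zero_apply, map_div₀, hσ]
    field_simp
  · intro h
    apply hne 1
    simp only [u, iterate_zero_apply, div_eq_one_iff_eq hX] at h
    exact twistedMap_eq_zero_of_map_eq σ hk.pos.ne' h

theorem not_exists_fixed_sq_eq_of_mobius_fixed (h2 : (2 : K) ≠ 0) (ha : σ a = a) (hc : σ c = c)
    (hac : a ^ 2 ≠ c ^ 2) {U : K} (hU : U * (c * U + a) = -(a * U + c)) (hN : σ U * U = 1)
    (hU1 : U ≠ 1) : ¬ ∃ y, σ y = y ∧ y ^ 2 = a ^ 2 - c ^ 2 := by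
  rintro ⟨y, hy, hy2⟩
  have hU0 : U ≠ 0 := right_ne_zero_of_mul_eq_one hN
  rcases eq_or_ne c 0 with rfl | hc0
  · have : 2 * a * U = 0 := by linear_combination hU
    simp [h2, hU0] at this
    simp [this] at hac
  have hfix : σ (c * U + a) = c * U + a := by
    rcases sq_eq_sq_iff_eq_or_eq_neg.mp (by linear_combination c * hU - hy2 :
      (c * U + a) ^ 2 = y ^ 2) with h | h <;> simp [h, hy]
  have hσU : σ U = U := mul_left_cancel₀ hc0 (by simpa [hc, ha] using hfix)
  rcases sq_eq_one_iff.mp (by rw [sq, ← hN, hσU] : U ^ 2 = 1) with h | h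
  · exact hU1 h
  · apply hac
    have : 2 * (a - c) = 0 := by rw [h] at hU; linear_combination -hU
    simp [h2, sub_eq_zero] at this
    rw [this]

theorem twistedMap_mul_of_map_eq {X₀ u w : K} (hX₀ : σ X₀ = u * X₀) (hw : σ w = w) :
    twistedMap σ a c k (w * X₀) = (c * u + a) * ((u - 1) * X₀) ^ k * w ^ (k + 1) * X₀ := by
  rw [twistedMap, map_mul, hw, hX₀, show w * (u * X₀) - w * X₀ = w * ((u - 1) * X₀) by ring,
    mul_pow]
  ring

theorem exists_odd_minimalPeriod_of_mul_pow (L : Subfield K) {f : K → K} {X₀ μ : K} {m N : ℕ}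
    (hX₀ : X₀ ≠ 0) (hμL : μ ∈ L) (hμ : μ ^ m = 1) (hm : m ≠ 0) (hN : Even N) (hN0 : N ≠ 0)
    (hf : ∀ w ∈ L, f (w * X₀) = μ * w ^ N * X₀) : ∃ X, X ≠ 0 ∧ Odd (minimalPeriod f X) := by
  have hμ0 : μ ≠ 0 := ne_zero_pow hm (hμ ▸ one_ne_zero)
  obtain ⟨M, hM, hgcd⟩ := exists_odd_gcd_pow_sub_one_dvd_geom_sum hN hN0 hm
  obtain ⟨z, hz⟩ := exists_zpow_fixed_of_gcd_dvd hμ0 hμ hgcd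
  rw [Nat.sub_add_cancel (Nat.one_le_pow _ _ (Nat.pos_of_ne_zero hN0))] at hz
  have hconj : ∀ j, ∀ w ∈ L, f^[j] (w * X₀) = (fun w => μ * w ^ N)^[j] w * X₀ :=
    fun j w hw => iterate_apply_of_semiconjOn (fun w hw => mul_mem hμL (pow_mem hw N))
      (fun w hw => hf w hw) j hw
  refine ⟨μ ^ z * X₀, mul_ne_zero (zpow_ne_zero z hμ0) hX₀,
    hM.of_dvd_nat (IsPeriodicPt.minimalPeriod_dvd ?_)⟩
  rw [IsPeriodicPt, IsFixedPt, hconj M _ (zpow_mem hμL z), iterate_mul_pow, hz]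

variable [Fintype K] {q : ℕ}

theorem exists_mobius_fixed_of_not_exists_fixed_sq_eq (hK : Fintype.card K = q ^ 2) (hq : Odd q)
    (hσ : ∀ x, σ x = x ^ q) (ha : σ a = a) (hc : σ c = c) (hac : a ^ 2 ≠ c ^ 2)
    (hns : ¬ ∃ y, σ y = y ∧ y ^ 2 = a ^ 2 - c ^ 2) :
    ∃ u, u * (c * u + a) = -(a * u + c) ∧ σ u * u = 1 ∧ u ≠ 1 := by
  have hc0 : c ≠ 0 := by rintro rfl; exact hns ⟨a, ha, by ring⟩
  obtain ⟨δ, hδ⟩ := FiniteField.exists_sq_eq_of_pow_eq_self hK hq (z := a ^ 2 - c ^ 2)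
    (by rw [← hσ]; simp [ha, hc])
  have hσδ : σ δ = -δ := by
    have : σ δ ^ 2 = δ ^ 2 := by rw [← map_pow, hδ]; simp [ha, hc]
    exact (sq_eq_sq_iff_eq_or_eq_neg.mp this).resolve_left fun h => hns ⟨δ, h, hδ⟩
  refine ⟨(δ - a) / c, ?_, ?_, fun h => hns ⟨δ, ?_, hδ⟩⟩
  · field_simp
    linear_combination hδ
  · rw [map_div₀, map_sub, hσδ, ha, hc]
    field_simp
    linear_combination -hδ
  · rw [div_eq_one_iff_eq hc0, sub_eq_iff_eq_add] at h
    simp [h, ha, hc]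

theorem exists_twistedMap_mul_eq_of_mobius_fixed (hK : Fintype.card K = q ^ 2)
    (hσ : ∀ x, σ x = x ^ q) (ha : σ a = a) (hc : σ c = c) (hk : Odd k) (hac : a ^ 2 ≠ c ^ 2) {u : K}
    (hu : u * (c * u + a) = -(a * u + c)) (hN : σ u * u = 1) (hu1 : u ≠ 1) :
    ∃ X₀ μ, X₀ ≠ 0 ∧ σ μ = μ ∧ μ ≠ 0 ∧
      ∀ w, σ w = w → twistedMap σ a c k (w * X₀) = μ * w ^ (k + 1) * X₀ := by
  obtain ⟨X₀, hX₀⟩ := FiniteField.exists_pow_sub_one_eq_of_pow_add_one_eq_one hK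
    (by rwa [pow_succ, ← hσ] : u ^ (q + 1) = 1)
  have hu0 : u ≠ 0 := right_ne_zero_of_mul_eq_one hN
  have hq : 1 < q := (Nat.one_lt_pow_iff two_ne_zero).mp (hK ▸ Fintype.one_lt_card)
  have hX₀0 : X₀ ≠ 0 := by
    rintro rfl
    exact hu0 (by rw [← hX₀, zero_pow (by omega)])
  have hσX₀ : σ X₀ = u * X₀ := by
    rw [hσ, ← Nat.sub_add_cancel hq.le, pow_succ, hX₀]
  have hδ0 : c * u + a ≠ 0 := fun h => hac (by linear_combination (a + c * u) * h - c * hu)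
  have hσδ : σ (c * u + a) = -(c * u + a) :=
    mul_left_cancel₀ hu0 (by rw [map_add, map_mul, hc, ha]; linear_combination c * hN + hu)
  have hσ' : σ ((u - 1) * X₀) = -((u - 1) * X₀) := by
    rw [map_mul, map_sub, map_one, hσX₀]
    linear_combination X₀ * hN
  refine ⟨X₀, (c * u + a) * ((u - 1) * X₀) ^ k, hX₀0, ?_, ?_, fun w hw => ?_⟩
  · rw [map_mul, map_pow, hσ', hσδ, hk.neg_pow]
    ring
  · exact mul_ne_zero hδ0 (pow_ne_zero _ (mul_ne_zero (sub_ne_zero.mpr hu1) hX₀0))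
  · rw [twistedMap_mul_of_map_eq hσX₀ hw]

end Twisted

theorem stmt_3_general (p s q : ℕ) (hp : p.Prime) (hpodd : p ≠ 2) (hq : q = p ^ s)
    (F : Type*) [Field F] [Fintype F] (hF : Fintype.card F = q ^ 2)
    (a c : F) (ha : a ^ q = a) (hc : c ^ q = c)
    (n : ℕ) (hn2 : 2 ≤ n) (hneven : Even n)
    (h1 : a + c ≠ 0) (h2 : a - c ≠ 0)
    (f : F → F) (hf : ∀ X, f X = (c * X ^ q + a * X) * (X ^ q - X) ^ (n - 1)) :
    (∃ X : F, X ≠ 0 ∧ Odd (Function.minimalPeriod f X)) ↔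
      ¬ ∃ y : F, y ^ q = y ∧ y ^ 2 = a ^ 2 - c ^ 2 := by
  have := Fact.mk hp
  have : CharP F p := charP_of_card_eq_prime_pow (f := s * 2) (by rw [hF, hq, pow_mul])
  set σ := iterateFrobenius F p s
  have hσ : ∀ x, σ x = x ^ q := fun x => by rw [hq]; rfl
  have hσσ : ∀ x, σ (σ x) = x := fun x => by
    rw [hσ, hσ, ← pow_mul, ← sq, ← hF, FiniteField.pow_card]
  have hk : Odd (n - 1) := Nat.Even.sub_odd (by omega) hneven odd_one
  have hac : a ^ 2 ≠ c ^ 2 := by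
    rw [Ne, ← sub_eq_zero, sq_sub_sq]; exact mul_ne_zero h1 h2
  have h2F : (2 : F) ≠ 0 := Ring.two_ne_zero (by rwa [ringChar.eq F p])
  obtain rfl : f = twistedMap σ a c (n - 1) := funext fun X => by rw [hf, twistedMap, hσ]
  simp_rw [← hσ] at ha hc ⊢
  constructor
  · rintro ⟨X, hX, hodd⟩
    obtain ⟨U, hU, hN, hU1⟩ := exists_mobius_fixed_of_odd_minimalPeriod hσσ ha hc hk hac hX hodd
    exact not_exists_fixed_sq_eq_of_mobius_fixed h2F ha hc hac hU hN hU1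
  · intro hns
    obtain ⟨u, hu, hN, hu1⟩ := exists_mobius_fixed_of_not_exists_fixed_sq_eq hF
      (hq ▸ (hp.odd_of_ne_two hpodd).pow) hσ ha hc hac hns
    obtain ⟨X₀, μ, hX₀, hμσ, hμ0, hconj⟩ :=
      exists_twistedMap_mul_eq_of_mobius_fixed hF hσ ha hc hk hac hu hN hu1
    have hq1 : 1 < q := (Nat.one_lt_pow_iff two_ne_zero).mp (hF ▸ Fintype.one_lt_card)
    exact exists_odd_minimalPeriod_of_mul_pow (σ.eqLocusField (RingHom.id F)) hX₀ hμσ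
      (pow_sub_one_eq_one_of_pow_eq_self hμ0 (by omega) (hσ μ ▸ hμσ)) (by omega) hk.add_one
      (Nat.succ_ne_zero _) hconj

/-- `n` even, `n ≥ 2`, `a + c ≠ 0`, `a - c ≠ 0`. Then `f` has a nonzero
periodic point of odd minimal period iff `a² - c²` is not a square in `F_q`. -/
theorem stmt_3 (p s q : ℕ) (hp : p.Prime) (hpodd : p ≠ 2) (hs : 0 < s) (hq : q = p ^ s)
    (F : Type*) [Field F] [Fintype F] (hF : Fintype.card F = q ^ 2)
    (a c : F) (ha : a ^ q = a) (hc : c ^ q = c)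
    (n : ℕ) (hn2 : 2 ≤ n) (hneven : Even n)
    (h1 : a + c ≠ 0) (h2 : a - c ≠ 0)
    (f : F → F) (hf : ∀ X, f X = (c * X ^ q + a * X) * (X ^ q - X) ^ (n - 1)) :
    (∃ X : F, X ≠ 0 ∧ Odd (Function.minimalPeriod f X)) ↔
      ¬ ∃ y : F, y ^ q = y ∧ y ^ 2 = a ^ 2 - c ^ 2 :=
  stmt_3_general p s q hp hpodd hq F hF a c ha hc n hn2 hneven h1 h2 f hf
end

section
/- Assume n is even, n ≥ 2, and a^2 ≠ c^2. Then for every nonzero α ∈ F_{q^2}, the number of X ∈ F_{q^2} with f(X) = α is either 0 or 𝔤(n). -/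
/-!
Write `T = X^q - X` and `S = X^q + X`. Since `n - 1` is odd and `T^q = -T`, the value
`α = f(X)` determines `α + α^q = (c - a) T^n` and `α - α^q = (c + a) S T^(n-1)`; as
`c ± a ≠ 0`, it determines `T^n` and `S/T`. As `2X = S - T`, two points of a nonzero fiber
differ by the factor `l = T_Y/T_X`, which lies in `𝔽_q` and satisfies `l^n = 1`, so
`l^𝔤(n) = 1`. Conversely `f(lX) = l^n f(X)` for `l ∈ 𝔽_q`, so a nonempty nonzero fiber is a
coset of the `𝔤(n)`-th roots of unity in `𝔽_{q²}ˣ`, which has `𝔤(n)` elements.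
-/

open Polynomial

section Involution

variable {F : Type*} [Field F] (σ : F →+* F) (a c : F) (m : ℕ)

/-- The map `f` is `twistedPow (· ^ q) a c (n - 1)`. -/
def twistedPow (X : F) : F := (c * σ X + a * X) * (σ X - X) ^ m

theorem twistedPow_zero : twistedPow σ a c m 0 = 0 := by
  simp [twistedPow]

theorem twistedPow_mul_of_fixed {l : F} (hl : σ l = l) (X : F) :
    twistedPow σ a c m (l * X) = l ^ (m + 1) * twistedPow σ a c m X := by
  simp only [twistedPow, map_mul, hl, ← mul_sub, mul_pow]
  ring

variable {σ} (hσ : ∀ x, σ (σ x) = x)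
include hσ

theorem map_sub_self_of_involutive (X : F) : σ (σ X - X) = -(σ X - X) := by
  rw [map_sub, hσ]; ring

variable {a c m} (ha : σ a = a) (hc : σ c = c) (hm : Odd m)
include ha hc hm

theorem map_twistedPow (X : F) :
    σ (twistedPow σ a c m X) = -((c * X + a * σ X) * (σ X - X) ^ m) := by
  rw [twistedPow, map_mul, map_pow, map_sub_self_of_involutive hσ, hm.neg_pow]
  simp only [map_add, map_mul, hσ, ha, hc]
  ring

theorem twistedPow_add_map (X : F) :
    twistedPow σ a c m X + σ (twistedPow σ a c m X) = (c - a) * (σ X - X) ^ (m + 1) := by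
  rw [map_twistedPow hσ ha hc hm, twistedPow]
  ring

theorem twistedPow_sub_map (X : F) :
    twistedPow σ a c m X - σ (twistedPow σ a c m X)
      = (c + a) * ((σ X + X) * (σ X - X) ^ m) := by
  rw [map_twistedPow hσ ha hc hm, twistedPow]
  ring

theorem exists_fixed_eq_mul_of_twistedPow_eq (h2 : (2 : F) ≠ 0) (hca : c - a ≠ 0)
    (hcpa : c + a ≠ 0) {X Y : F} (hX : twistedPow σ a c m X ≠ 0)
    (hXY : twistedPow σ a c m Y = twistedPow σ a c m X) :
    ∃ l, σ l = l ∧ l ^ (m + 1) = 1 ∧ Y = l * X := by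
  have hT : ∀ Z, twistedPow σ a c m Z ≠ 0 → σ Z - Z ≠ 0 := fun Z hZ h0 ↦
    hZ (by rw [twistedPow, h0, zero_pow hm.pos.ne', mul_zero])
  have hTX := hT X hX
  have hTY := hT Y (hXY ▸ hX)
  have hTn : (σ Y - Y) ^ (m + 1) = (σ X - X) ^ (m + 1) := mul_left_cancel₀ hca <| by
    rw [← twistedPow_add_map hσ ha hc hm, ← twistedPow_add_map hσ ha hc hm, hXY]
  have hST : (σ Y + Y) * (σ Y - Y) ^ m = (σ X + X) * (σ X - X) ^ m :=
    mul_left_cancel₀ hcpa <| by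
      rw [← twistedPow_sub_map hσ ha hc hm, ← twistedPow_sub_map hσ ha hc hm, hXY]
  have hcross : (σ Y + Y) * (σ X - X) = (σ X + X) * (σ Y - Y) := by
    apply mul_right_cancel₀ (mul_ne_zero (pow_ne_zero m hTY) (pow_ne_zero m hTX))
    linear_combination (σ X - X) ^ (m + 1) * hST - (σ X + X) * (σ X - X) ^ m * hTn
  refine ⟨(σ Y - Y) / (σ X - X), ?_, ?_, ?_⟩
  · rw [map_div₀, map_sub_self_of_involutive hσ, map_sub_self_of_involutive hσ, neg_div_neg_eq]
  · rw [div_pow, hTn, div_self (pow_ne_zero _ hTX)]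
  · rw [div_mul_eq_mul_div, eq_div_iff hTX]
    -- `2Z = (σZ + Z) - (σZ - Z)`
    apply mul_left_cancel₀ h2
    linear_combination hcross

theorem preimage_twistedPow_eq (h2 : (2 : F) ≠ 0) (hca : c - a ≠ 0) (hcpa : c + a ≠ 0)
    {α X₀ : F} (hα : α ≠ 0) (hX₀ : twistedPow σ a c m X₀ = α) :
    twistedPow σ a c m ⁻¹' {α} = (· * X₀) '' {l | σ l = l ∧ l ^ (m + 1) = 1} := by
  ext Y
  constructor
  · intro hY
    obtain ⟨l, hl, hlm, rfl⟩ := exists_fixed_eq_mul_of_twistedPow_eq hσ ha hc hm h2 hca hcpa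
      (hX₀ ▸ hα) (hY.trans hX₀.symm)
    exact ⟨l, ⟨hl, hlm⟩, rfl⟩
  · rintro ⟨l, ⟨hl, hlm⟩, rfl⟩
    rw [Set.mem_preimage, twistedPow_mul_of_fixed σ a c m hl, hlm, one_mul, hX₀,
      Set.mem_singleton_iff]

theorem ncard_preimage_twistedPow (h2 : (2 : F) ≠ 0) (hca : c - a ≠ 0) (hcpa : c + a ≠ 0)
    {α : F} (hα : α ≠ 0) :
    (twistedPow σ a c m ⁻¹' {α}).ncard = 0 ∨
      (twistedPow σ a c m ⁻¹' {α}).ncard = {l | σ l = l ∧ l ^ (m + 1) = 1}.ncard := by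
  rcases (twistedPow σ a c m ⁻¹' {α}).eq_empty_or_nonempty with hempty | ⟨X₀, hX₀⟩
  · exact Or.inl (by rw [hempty, Set.ncard_empty])
  have hX₀0 : X₀ ≠ 0 := by
    rintro rfl
    exact hα (hX₀.symm.trans (twistedPow_zero σ a c m))
  rw [preimage_twistedPow_eq hσ ha hc hm h2 hca hcpa hα hX₀,
    Set.ncard_image_of_injective _ (mul_left_injective₀ hX₀0)]
  exact Or.inr rfl

end Involution

theorem setOf_pow_eq_self_and_pow_eq_one {M : Type*} [MonoidWithZero M] [IsLeftCancelMulZero M]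
    [Nontrivial M] {q n : ℕ} (hq : q ≠ 0) (hn : n ≠ 0) :
    {l : M | l ^ q = l ∧ l ^ n = 1} = {l | l ^ n.gcd (q - 1) = 1} := by
  ext l
  have hq1 : q - 1 + 1 = q := Nat.sub_add_cancel (Nat.one_le_iff_ne_zero.mpr hq)
  simp only [Set.mem_ofPred_eq, pow_gcd_eq_one]
  constructor
  · rintro ⟨hlq, hln⟩
    have hl0 : l ≠ 0 := by
      rintro rfl
      exact zero_ne_one ((zero_pow hn).symm.trans hln)
    refine ⟨hln, mul_left_cancel₀ hl0 ?_⟩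
    rw [← pow_succ', hq1, hlq, mul_one]
  · rintro ⟨hln, hlq⟩
    exact ⟨by rw [← hq1, pow_succ, hlq, one_mul], hln⟩

theorem FiniteField.ncard_setOf_pow_eq_one {K : Type*} [Field K] [Fintype K] {d : ℕ}
    (hd : d ∣ Fintype.card K - 1) : {x : K | x ^ d = 1}.ncard = d := by
  classical
  obtain ⟨g, hg⟩ := IsCyclic.exists_ofOrder_eq_natCard (α := Kˣ)
  rw [Nat.card_eq_fintype_card, Fintype.card_units] at hg
  have hcard : 0 < Fintype.card K - 1 := Nat.sub_pos_of_lt Fintype.one_lt_card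
  have hd0 : 0 < d := Nat.pos_of_dvd_of_pos hd hcard
  have hζ : IsPrimitiveRoot ((g ^ (orderOf g / d) : Kˣ) : K) d := by
    rw [IsPrimitiveRoot.coe_units_iff]
    convert IsPrimitiveRoot.orderOf _
    exact (orderOf_pow_orderOf_div (by omega) (hg ▸ hd)).symm
  have hroots : {x : K | x ^ d = 1} = ↑(nthRootsFinset d (1 : K)) := by
    ext x
    rw [Finset.mem_coe, mem_nthRootsFinset hd0, Set.mem_ofPred_eq]
  rw [hroots, Set.ncard_coe_finset, hζ.card_nthRootsFinset]

theorem stmt_9_general (p s q : ℕ) (hp : p.Prime) (hpodd : p ≠ 2) (hq : q = p ^ s)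
    (F : Type*) [Field F] [Fintype F] (hF : Fintype.card F = q ^ 2)
    (a c : F) (ha : a ^ q = a) (hc : c ^ q = c)
    (n : ℕ) (hn2 : 2 ≤ n) (hneven : Even n)
    (hac : a ^ 2 ≠ c ^ 2)
    (f : F → F) (hf : ∀ X, f X = (c * X ^ q + a * X) * (X ^ q - X) ^ (n - 1)) :
    ∀ α : F, α ≠ 0 →
      (f ⁻¹' {α}).ncard = 0 ∨ (f ⁻¹' {α}).ncard = Nat.gcd n (q - 1) := by
  have := Fact.mk hp
  have : CharP F p := charP_of_card_eq_prime_pow (by rw [hF, hq, ← pow_mul])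
  set σ := iterateFrobenius F p s
  have hσq (x : F) : σ x = x ^ q := by rw [hq]; rfl
  have hσ (x : F) : σ (σ x) = x := by
    rw [hσq, hσq, ← pow_mul, ← sq, ← hF, FiniteField.pow_card]
  have h2 : (2 : F) ≠ 0 := Ring.two_ne_zero (by rwa [ringChar.eq F p])
  obtain ⟨hca, hcpa⟩ : c - a ≠ 0 ∧ c + a ≠ 0 :=
    mul_ne_zero_iff.mp fun h ↦ hac (by linear_combination -h)
  have hfσ : f = twistedPow σ a c (n - 1) := funext fun X ↦ by rw [hf, twistedPow, hσq]
  intro α hα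
  subst hfσ
  refine (ncard_preimage_twistedPow hσ (by rw [hσq, ha]) (by rw [hσq, hc])
    (Nat.Even.sub_odd (by omega) hneven odd_one) h2 hca hcpa hα).imp_right fun h ↦ ?_
  have hq0 : q ≠ 0 := hq ▸ pow_ne_zero s hp.ne_zero
  simp only [hσq] at h
  rw [h, Nat.sub_add_cancel (by omega : 1 ≤ n), setOf_pow_eq_self_and_pow_eq_one hq0 (by omega),
    FiniteField.ncard_setOf_pow_eq_one]
  rw [hF, ← one_pow 2]
  exact (Nat.gcd_dvd_right n (q - 1)).trans (Nat.sub_dvd_pow_sub_pow q 1 2)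

/-- `n` even, `n ≥ 2`, `a² ≠ c²`. For every nonzero `α`, the number of `X`
with `f(X) = α` is either `0` or `𝔤(n)`. -/
theorem stmt_9 (p s q : ℕ) (hp : p.Prime) (hpodd : p ≠ 2) (hs : 0 < s) (hq : q = p ^ s)
    (F : Type*) [Field F] [Fintype F] (hF : Fintype.card F = q ^ 2)
    (a c : F) (ha : a ^ q = a) (hc : c ^ q = c)
    (n : ℕ) (hn2 : 2 ≤ n) (hneven : Even n)
    (hac : a ^ 2 ≠ c ^ 2)
    (f : F → F) (hf : ∀ X, f X = (c * X ^ q + a * X) * (X ^ q - X) ^ (n - 1)) :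
    ∀ α : F, α ≠ 0 →
      (f ⁻¹' {α}).ncard = 0 ∨ (f ⁻¹' {α}).ncard = Nat.gcd n (q - 1) :=
  stmt_9_general p s q hp hpodd hq F hF a c ha hc n hn2 hneven hac f hf
end

section
/- Assume n is even, n ≥ 2, and a^2 ≠ c^2. Then for every nonzero periodic point X₀ of f, the maximum integer k such that some Y ∈ F_{q^2} hangs at depth k from X₀ equals e + 1; that is, some Y hangs at depth e+1 from X₀, and no Y hangs at depth greater than e+1 from X₀. -/
/-!
Write `σ` for the Frobenius `X ↦ X ^ q`, an involution of `𝔽_{q²}`. The map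
`u X = (X + σ X) (σ X - X) ^ n` takes values in `𝔽_q` (as `n` is even) and satisfies
`u (f X) = C (u X) ^ n` with `C = (c - a) (a + c) ^ n ≠ 0`. Over the points where `u ≠ 0`, `f` is
injective on the fibres of `u`, and every `t ∈ 𝔽_q^*` with `C t ^ n = u Z` is `u W` for some
preimage `W` of `Z`. Hence the trees hanging from periodic points of `f` are as deep as those of
`t ↦ C t ^ n` on the cyclic group `𝔽_q^*`. There the `k`-th image is a coset of the subgroup of
`n ^ k`-th powers, which has index `gcd (n ^ k, q - 1)`; these subgroups shrink strictly up to
`k = e + 1` and are constant from then on. So the periodic points form the `(e + 1)`-st image, and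
every periodic point has a preimage in the `e`-th image outside the `(e + 1)`-st one.
-/

open Function Set

theorem Nat.gcd_pow_dvd_of_coprime {n r s N : ℕ} (hr : Nat.Coprime r n) (hN : N = s * r) (k : ℕ) :
    Nat.gcd (n ^ k) N ∣ s :=
  (Nat.Coprime.coprime_dvd_left (Nat.gcd_dvd_left _ _) (hr.symm.pow_left k)).dvd_of_dvd_mul_right
    (hN ▸ Nat.gcd_dvd_right _ _)

theorem Nat.gcd_pow_eq_of_lt {n r s N e : ℕ} (hr : Nat.Coprime r n) (hN : N = s * r) (hs : s ≠ 0)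
    (hemax : ∀ e', Nat.gcd (n ^ e') N < s → e' ≤ e) {k : ℕ} (hk : e < k) :
    Nat.gcd (n ^ k) N = s :=
  le_antisymm (Nat.le_of_dvd (Nat.pos_of_ne_zero hs) (Nat.gcd_pow_dvd_of_coprime hr hN k))
    (not_lt.mp fun h => absurd (hemax k h) (not_le.mpr hk))

section PowerMaps

variable {G : Type*} [CommGroup G] {N : ℕ}

theorem exists_pow_eq_pow_of_gcd_dvd (hN : ∀ x : G, x ^ N = 1) {m m' : ℕ}
    (h : Nat.gcd m' N ∣ m) (x : G) : ∃ y : G, x ^ m = y ^ m' := by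
  obtain ⟨w, rfl⟩ := h
  refine ⟨x ^ (Nat.gcdA m' N * w), ?_⟩
  rw [← zpow_natCast, ← zpow_natCast, ← zpow_mul, zpow_eq_zpow_iff_modEq]
  refine Int.ModEq.of_dvd (Int.natCast_dvd_natCast.mpr (orderOf_dvd_of_pow_eq_one (hN x)))
    (Int.modEq_iff_dvd.mpr ⟨-(Nat.gcdB m' N * w), ?_⟩)
  push_cast
  rw [Nat.gcd_eq_gcd_ab m' N]
  ring

theorem pow_ne_pow_of_gcd_lt (hN : ∀ x : G, x ^ N = 1) (hN0 : 0 < N) {ζ : G}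
    (hζ : orderOf ζ = N) {m m' : ℕ} (h : Nat.gcd m N < Nat.gcd m' N) (y : G) :
    ζ ^ m ≠ y ^ m' := by
  intro hζy
  obtain ⟨a, ha⟩ := Nat.gcd_dvd_left m' N
  obtain ⟨b, hb⟩ := Nat.gcd_dvd_right m' N
  have hb0 : 0 < b := Nat.pos_of_ne_zero (by rintro rfl; omega)
  have hζb : ζ ^ (m * b) = 1 := by
    rw [pow_mul, hζy, ← pow_mul, ha, mul_assoc, mul_left_comm, ← hb, pow_mul, hN]
  have hdvd : Nat.gcd m' N ∣ m := by
    have := hζ ▸ orderOf_dvd_of_pow_eq_one hζb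
    rw [hb] at this
    exact Nat.dvd_of_mul_dvd_mul_right hb0 this
  exact absurd (Nat.le_of_dvd (Nat.gcd_pos_of_pos_right m hN0) (Nat.dvd_gcd hdvd
    (Nat.gcd_dvd_right m' N))) (not_le.mpr h)

variable (C : G) (n : ℕ)

def powAffine (x : G) : G := C * x ^ n

theorem powAffine_iterate (k : ℕ) (x : G) :
    (powAffine C n)^[k] x = (powAffine C n)^[k] 1 * x ^ n ^ k := by
  induction k generalizing x with
  | zero => simp
  | succ k ih =>
    rw [iterate_succ_apply', iterate_succ_apply', ih, ih 1]
    simp only [powAffine, one_pow, mul_one, mul_pow, ← pow_mul, pow_succ, mul_assoc]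

variable {C n}

theorem mem_range_powAffine_iterate {k : ℕ} {y : G} :
    y ∈ range (powAffine C n)^[k] ↔ ∃ x, (powAffine C n)^[k] 1 * x ^ n ^ k = y := by
  simp only [mem_range]
  exact exists_congr fun x => by rw [powAffine_iterate]

theorem injOn_powAffine (hN : ∀ x : G, x ^ N = 1) {j : ℕ} (h : Nat.gcd (n ^ (j + 1)) N ∣ n ^ j) :
    InjOn (powAffine C n) (range (powAffine C n)^[j]) := by
  rintro _ ⟨a, rfl⟩ _ ⟨b, rfl⟩ hab
  rw [powAffine_iterate, powAffine_iterate C n j b] at *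
  simp only [powAffine, mul_right_inj, mul_pow, ← pow_mul, ← pow_succ] at hab
  have hab1 : (a / b) ^ n ^ (j + 1) = 1 := by rw [div_pow, hab, div_self']
  have hab2 : (a / b) ^ n ^ j = 1 :=
    orderOf_dvd_iff_pow_eq_one.mp ((orderOf_dvd_of_pow_eq_one
      (pow_gcd_eq_one.mpr ⟨hab1, hN _⟩)).trans h)
  rw [div_pow, div_eq_one] at hab2
  rw [hab2]

theorem exists_pow_pow_eq_one_and_forall_ne_pow (hN : ∀ x : G, x ^ N = 1) (hN0 : 0 < N) {ζ : G}
    (hζ : orderOf ζ = N) {j : ℕ} (hstab : Nat.gcd (n ^ (j + 2)) N ∣ n ^ (j + 1))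
    (hstrict : Nat.gcd (n ^ j) N < Nat.gcd (n ^ (j + 1)) N) :
    ∃ x : G, (x ^ n ^ j) ^ n = 1 ∧ ∀ y : G, x ^ n ^ j ≠ y ^ n ^ (j + 1) := by
  obtain ⟨y, hy⟩ := exists_pow_eq_pow_of_gcd_dvd hN hstab ζ
  refine ⟨ζ / y ^ n, ?_, fun z hz => pow_ne_pow_of_gcd_lt hN hN0 hζ hstrict (z * y) ?_⟩
  · rw [← pow_mul, ← pow_succ, div_pow, ← pow_mul, ← pow_succ', hy, div_self']
  · rw [mul_pow, ← hz, div_pow, ← pow_mul, ← pow_succ', div_mul_cancel]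

theorem exists_powAffine_eq_of_mem_range (hN : ∀ x : G, x ^ N = 1) (hN0 : 0 < N) {ζ : G}
    (hζ : orderOf ζ = N) {j : ℕ} (hstab : Nat.gcd (n ^ (j + 2)) N ∣ n ^ (j + 1))
    (hstrict : Nat.gcd (n ^ j) N < Nat.gcd (n ^ (j + 1)) N) {t : G}
    (ht : t ∈ range (powAffine C n)^[j + 1]) :
    ∃ t' ∈ range (powAffine C n)^[j], t' ∉ range (powAffine C n)^[j + 1] ∧
      powAffine C n t' = t := by
  obtain ⟨w, rfl⟩ := ht
  rw [iterate_succ_apply']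
  -- If the obvious preimage lies too deep, multiply it by an `n`-torsion element of the
  -- `n ^ j`-th powers that is not an `n ^ (j + 1)`-th power.
  by_cases hw : (powAffine C n)^[j] w ∈ range (powAffine C n)^[j + 1]
  · obtain ⟨x, hx1, hx⟩ := exists_pow_pow_eq_one_and_forall_ne_pow hN hN0 hζ hstab hstrict
    obtain ⟨a, ha⟩ := mem_range_powAffine_iterate.mp hw
    refine ⟨(powAffine C n)^[j] w * x ^ n ^ j, ⟨w * x, ?_⟩, ?_, ?_⟩
    · rw [powAffine_iterate, powAffine_iterate C n j w, mul_pow, mul_assoc]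
    · rintro ⟨b, hb⟩
      rw [powAffine_iterate, ← ha, mul_assoc, mul_right_inj] at hb
      exact hx (b / a) (by rw [div_pow, hb, mul_div_cancel_left])
    · simp only [powAffine, mul_pow, hx1, mul_one]
  · exact ⟨_, mem_range_self w, hw, rfl⟩

end PowerMaps

theorem Set.InjOn.mem_periodicPts {α : Type*} {f : α → α} {s : Set α} (hinj : InjOn f s)
    (hs : s.Finite) (hmaps : MapsTo f s s) {x : α} (hx : x ∈ s) : x ∈ periodicPts f := by
  have : Finite s := hs
  obtain ⟨k, hk, hkx⟩ :=
    Function.mem_periodicPts.mp ((hmaps.restrict_inj.mpr hinj).mem_periodicPts ⟨x, hx⟩)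
  refine mk_mem_periodicPts hk ?_
  have := congrArg Subtype.val hkx
  rwa [hmaps.iterate_restrict, MapsTo.val_restrict_apply] at this

namespace Function

variable {α : Type*} {f : α → α} {x : α}

theorem eq_of_mem_periodicPts_of_iterate_eq {y : α} (hx : x ∈ periodicPts f)
    (hy : IsFixedPt f y) {k : ℕ} (hk : f^[k] x = y) : x = y := by
  obtain ⟨P, hP, hPx⟩ := mem_periodicPts.mp hx
  calc x = f^[P * k] x := (hPx.mul_const k).eq.symm
    _ = f^[P * k - k] (f^[k] x) := by
        rw [← iterate_add_apply, Nat.sub_add_cancel (Nat.le_mul_of_pos_left k hP)]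
    _ = y := by rw [hk, (hy.iterate _).eq]

theorem mem_range_iterate_of_mem_periodicPts (hx : x ∈ periodicPts f) (j : ℕ) :
    x ∈ range f^[j] := by
  obtain ⟨P, hP, hPx⟩ := mem_periodicPts.mp hx
  exact periodicPts_subset_range (mk_mem_periodicPts hP (hPx.iterate j))

end Function

section Semiconj

variable {α β G : Type*} {f : α → α} {φ : β → β} {g : G → G} {u : α → β} {ι : G → β}

theorem exists_iterate_eq_of_lift (hlift : ∀ Z z, u Z = ι (g z) → ∃ W, f W = Z ∧ u W = ι z)
    (k : ℕ) {Z : α} {z : G} (hZ : u Z = ι (g^[k] z)) : ∃ Y, f^[k] Y = Z ∧ u Y = ι z := by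
  induction k generalizing Z z with
  | zero => exact ⟨Z, rfl, hZ⟩
  | succ k ih =>
    rw [iterate_succ_apply] at hZ
    obtain ⟨W, hW, hWz⟩ := ih hZ
    obtain ⟨Y, hY, hYz⟩ := hlift W z hWz
    exact ⟨Y, by rw [iterate_succ_apply, hY, hW], hYz⟩

theorem mem_periodicPts_of_semiconj (hu : Semiconj u f φ) (hι : Semiconj ι g φ)
    (hιinj : Injective ι) {X : α} {z : G} (hX : X ∈ periodicPts f) (hXz : u X = ι z) :
    z ∈ periodicPts g := by
  obtain ⟨k, hk, hkX⟩ := mem_periodicPts.mp hX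
  refine mk_mem_periodicPts hk (hιinj ?_)
  rw [(hι.iterate_right k).eq, ← hXz, ← (hu.iterate_right k).eq, hkX.eq]

theorem mem_periodicPts_of_mem_range [Finite α] (hu : Semiconj u f φ) (hι : Semiconj ι g φ)
    (hιinj : Injective ι) (hfib : ∀ P Q, u P ∈ range ι → u P = u Q → f P = f Q → P = Q)
    {j : ℕ} (hg : InjOn g (range g^[j])) {X : α} {w : G} (hX : u X = ι (g^[j] w)) :
    X ∈ periodicPts f := by
  have hmaps : MapsTo f {X | ∃ w, u X = ι (g^[j] w)} {X | ∃ w, u X = ι (g^[j] w)} := by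
    rintro X ⟨w, hw⟩
    exact ⟨g w, by rw [hu.eq, hw, ← hι.eq, ← iterate_succ_apply' g, iterate_succ_apply]⟩
  refine InjOn.mem_periodicPts ?_ (toFinite _) hmaps ⟨w, hX⟩
  rintro P ⟨wP, hP⟩ Q ⟨wQ, hQ⟩ hPQ
  have hgPQ : g (g^[j] wP) = g (g^[j] wQ) := by
    apply hιinj
    rw [hι.eq, hι.eq, ← hP, ← hQ, ← hu.eq, ← hu.eq, hPQ]
  exact hfib P Q ⟨_, hP.symm⟩ (by rw [hP, hQ, hg (mem_range_self _) (mem_range_self _) hgPQ]) hPQ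

theorem exists_iterate_eq_forall_not_mem_periodicPts [Finite α] (hu : Semiconj u f φ)
    (hι : Semiconj ι g φ) (hιinj : Injective ι)
    (hlift : ∀ Z z, u Z = ι (g z) → ∃ W, f W = Z ∧ u W = ι z) {e : ℕ}
    (hdeep : ∀ t ∈ range g^[e + 1], ∃ t' ∈ range g^[e], t' ∉ range g^[e + 1] ∧ g t' = t)
    {X₀ : α} (hX₀ : X₀ ∈ periodicPts f) {z₀ : G} (hz₀ : u X₀ = ι z₀) :
    ∃ Y, f^[e + 1] Y = X₀ ∧ ∀ i < e + 1, f^[i] Y ∉ periodicPts f := by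
  obtain ⟨_, ⟨w, rfl⟩, hnot, hw⟩ := hdeep z₀ <|
    mem_range_iterate_of_mem_periodicPts (mem_periodicPts_of_semiconj hu hι hιinj hX₀ hz₀) _
  obtain ⟨Y, hY, hYw⟩ := exists_iterate_eq_of_lift hlift (e + 1) <| by
    rw [hz₀, ← hw, iterate_succ_apply']
  refine ⟨Y, hY, fun i hi hper => hnot ?_⟩
  have hwi : g^[i] w ∈ periodicPts g := mem_periodicPts_of_semiconj hu hι hιinj hper <| by
    rw [(hu.iterate_right i).eq, hYw, (hι.iterate_right i).eq]
  have := (Commute.iterate_self g (e - i)).mapsTo_periodicPts hwi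
  rw [← iterate_add_apply, Nat.sub_add_cancel (by omega)] at this
  exact mem_range_iterate_of_mem_periodicPts this _

theorem le_of_forall_not_mem_periodicPts [Finite α] (hu : Semiconj u f φ)
    (hι : Semiconj ι g φ) (hιinj : Injective ι)
    (hfib : ∀ P Q, u P ∈ range ι → u P = u Q → f P = f Q → P = Q)
    (hback : ∀ X, u (f X) ∈ range ι → u X ∈ range ι) {j : ℕ} (hg : InjOn g (range g^[j]))
    {k : ℕ} {Y : α} (hY : u (f^[k] Y) ∈ range ι) (hnp : ∀ i < k, f^[i] Y ∉ periodicPts f) :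
    k ≤ j := by
  by_contra! hjk
  have hback' : ∀ k Y, u (f^[k] Y) ∈ range ι → u Y ∈ range ι := by
    intro k
    induction k with
    | zero => exact fun _ h => h
    | succ k ih => exact fun Y h => ih Y (hback _ (by rwa [← iterate_succ_apply' f]))
  obtain ⟨w, hw⟩ := hback' k Y hY
  refine hnp j hjk (mem_periodicPts_of_mem_range hu hι hιinj hfib hg (w := w) ?_)
  rw [(hu.iterate_right j).eq, ← hw, (hι.iterate_right j).eq]

end Semiconj

section Involution

variable {F : Type*} [Field F] (σ : F →+* F) (a c : F) (n : ℕ)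

def dynMap (X : F) : F := (c * σ X + a * X) * (σ X - X) ^ (n - 1)

def dynProj (X : F) : F := (X + σ X) * (σ X - X) ^ n

variable {σ a c n}

theorem map_sub_self (hσ : Involutive σ) (X : F) : σ (σ X - X) = -(σ X - X) := by
  rw [map_sub, hσ X, neg_sub]

theorem map_dynProj (hσ : Involutive σ) (hn : Even n) (X : F) :
    σ (dynProj σ n X) = dynProj σ n X := by
  rw [dynProj, map_mul, map_pow, map_sub_self hσ, hn.neg_pow, map_add, hσ X, add_comm (σ X)]

theorem map_dynMap (hσ : Involutive σ) (ha : σ a = a) (hc : σ c = c) (hn : Odd (n - 1))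
    (X : F) : σ (dynMap σ a c n X) = -((c * X + a * σ X) * (σ X - X) ^ (n - 1)) := by
  rw [dynMap, map_mul, map_pow, map_sub_self hσ, hn.neg_pow, map_add, map_mul, map_mul, ha, hc,
    hσ X, mul_neg]

theorem dynMap_add_map (hσ : Involutive σ) (ha : σ a = a) (hc : σ c = c) (hn : Even n)
    (hn0 : n ≠ 0) (X : F) :
    dynMap σ a c n X + σ (dynMap σ a c n X) = (c - a) * (σ X - X) ^ n := by
  rw [map_dynMap hσ ha hc (Nat.Even.sub_odd (by omega) hn odd_one), dynMap, ← pow_sub_one_mul hn0]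
  ring

theorem map_dynMap_sub (hσ : Involutive σ) (ha : σ a = a) (hc : σ c = c) (hn : Even n)
    (hn0 : n ≠ 0) (X : F) :
    σ (dynMap σ a c n X) - dynMap σ a c n X = -((a + c) * (X + σ X) * (σ X - X) ^ (n - 1)) := by
  rw [map_dynMap hσ ha hc (Nat.Even.sub_odd (by omega) hn odd_one), dynMap]
  ring

theorem dynProj_dynMap (hσ : Involutive σ) (ha : σ a = a) (hc : σ c = c) (hn : Even n)
    (hn0 : n ≠ 0) (X : F) :
    dynProj σ n (dynMap σ a c n X) = (c - a) * (a + c) ^ n * dynProj σ n X ^ n := by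
  rw [dynProj, dynMap_add_map hσ ha hc hn hn0, map_dynMap_sub hσ ha hc hn hn0, hn.neg_pow, dynProj]
  obtain ⟨k, rfl⟩ := Nat.exists_eq_add_one_of_ne_zero hn0
  rw [Nat.add_sub_cancel]
  generalize σ X - X = D
  generalize X + σ X = S
  simp only [mul_pow, ← pow_mul]
  ring

theorem eq_of_dynMap_eq (hσ : Involutive σ) (ha : σ a = a) (hc : σ c = c) (hn : Even n)
    (hn0 : n ≠ 0) (h2 : (2 : F) ≠ 0) (hac : a + c ≠ 0) (hca : c - a ≠ 0) {P Q : F}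
    (hP : dynProj σ n P ≠ 0) (hPQ : dynProj σ n P = dynProj σ n Q)
    (hf : dynMap σ a c n P = dynMap σ a c n Q) : P = Q := by
  have hDn : (σ P - P) ^ n = (σ Q - Q) ^ n := mul_left_cancel₀ hca <| by
    rw [← dynMap_add_map hσ ha hc hn hn0, ← dynMap_add_map hσ ha hc hn hn0, hf]
  rw [dynProj, dynProj] at hPQ
  rw [dynProj] at hP
  obtain ⟨hS0, hDn0⟩ := mul_ne_zero_iff.mp hP
  have hS : P + σ P = Q + σ Q := mul_right_cancel₀ hDn0 (by rw [hPQ, hDn])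
  have hD1 : (σ P - P) ^ (n - 1) = (σ Q - Q) ^ (n - 1) :=
    mul_left_cancel₀ (mul_ne_zero hac hS0) <| neg_inj.mp <| by
      rw [← map_dynMap_sub hσ ha hc hn hn0, hf, map_dynMap_sub hσ ha hc hn hn0, hS]
  have hD : σ P - P = σ Q - Q := by
    have hD10 : (σ P - P) ^ (n - 1) ≠ 0 := by
      rintro h
      exact hDn0 (by rw [← pow_sub_one_mul hn0, h, zero_mul])
    apply mul_left_cancel₀ hD10
    rw [pow_sub_one_mul hn0, hD1, pow_sub_one_mul hn0, hDn]
  exact mul_left_cancel₀ h2 (by linear_combination hS - hD)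

theorem dynProj_dynMap_of_map_eq_neg (hn : Even n) (hn0 : n ≠ 0)
    (h2 : (2 : F) ≠ 0) {x v : F} (hx : σ x = x) (hv : σ v = -v) :
    dynProj σ n ((x + v) / 2) = x * v ^ n ∧
      dynMap σ a c n ((x + v) / 2) = ((c - a) * v - (a + c) * x) * v ^ (n - 1) / 2 := by
  have hW : σ ((x + v) / 2) = (x - v) / 2 := by
    rw [map_div₀, map_add, hx, hv, map_ofNat, sub_eq_add_neg]
  have hD : σ ((x + v) / 2) - (x + v) / 2 = -v := by rw [hW]; field_simp; ring
  constructor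
  · rw [dynProj, hD, hn.neg_pow, hW]
    field_simp
    ring
  · rw [dynMap, hD, (Nat.Even.sub_odd (by omega) hn odd_one).neg_pow, hW]
    field_simp
    ring

theorem exists_dynMap_eq (hσ : Involutive σ) (ha : σ a = a) (hc : σ c = c) (hn : Even n)
    (hn0 : n ≠ 0) (h2 : (2 : F) ≠ 0) (hac : a + c ≠ 0) (hca : c - a ≠ 0) {t Z : F}
    (ht : σ t = t) (ht0 : t ≠ 0) (hZ : (c - a) * (a + c) ^ n * t ^ n = dynProj σ n Z) :
    ∃ W, dynMap σ a c n W = Z ∧ dynProj σ n W = t := by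
  have hD0 : σ Z - Z ≠ 0 := by
    intro hD
    rw [dynProj, hD, zero_pow hn0, mul_zero] at hZ
    exact mul_ne_zero (mul_ne_zero hca (pow_ne_zero _ hac)) (pow_ne_zero _ ht0) hZ
  -- `W` is pinned down by `W + σ W = t / v ^ n` and `σ W - W = -v`.
  set v := (a + c) * t / (σ Z - Z) with hv_def
  have hv0 : v ≠ 0 := div_ne_zero (mul_ne_zero hac ht0) hD0
  have hv : σ v = -v := by
    rw [map_div₀, map_mul, map_add, ha, hc, ht, map_sub_self hσ, div_neg]
  have hx : σ (t / v ^ n) = t / v ^ n := by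
    rw [map_div₀, map_pow, hv, hn.neg_pow, ht]
  obtain ⟨hproj, hmap⟩ := dynProj_dynMap_of_map_eq_neg (a := a) (c := c) hn hn0 h2 hx hv
  refine ⟨_, ?_, by rw [hproj, div_mul_cancel₀ _ (pow_ne_zero _ hv0)]⟩
  have hS : Z + σ Z = (c - a) * v ^ n := by
    apply mul_right_cancel₀ (pow_ne_zero n hD0)
    rw [show (Z + σ Z) * (σ Z - Z) ^ n = dynProj σ n Z from rfl, ← hZ, mul_assoc (c - a) (v ^ n),
      ← mul_pow, hv_def, div_mul_cancel₀ _ hD0, mul_pow, mul_assoc]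
  have hD : σ Z - Z = (a + c) * t / v := by
    rw [hv_def, div_div_cancel₀ (mul_ne_zero hac ht0)]
  have hv1 : v * v ^ (n - 1) = v ^ n := by rw [mul_comm, pow_sub_one_mul hn0]
  have hv2 : t / v ^ n * v ^ (n - 1) = t / v := by rw [← hv1]; field_simp
  rw [hmap, div_eq_iff h2]
  linear_combination (c - a) * hv1 - (a + c) * hv2 - hS + hD

theorem dynProj_ne_zero_of_mem_periodicPts (hσ : Involutive σ) (ha : σ a = a) (hc : σ c = c)
    (hn : Even n) (hn0 : n ≠ 0) {X : F} (hX : X ∈ periodicPts (dynMap σ a c n)) (hX0 : X ≠ 0) :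
    dynProj σ n X ≠ 0 := by
  have hfix : ∀ Y, σ Y = Y → dynMap σ a c n Y = 0 := fun Y hY => by
    rw [dynMap, hY, sub_self, zero_pow (by obtain ⟨k, rfl⟩ := hn; omega), mul_zero]
  have h0 : IsFixedPt (dynMap σ a c n) 0 := hfix 0 (map_zero σ)
  intro hX'
  rcases mul_eq_zero.mp hX' with hS | hD
  · have hfX : σ (dynMap σ a c n X) = dynMap σ a c n X := by
      rw [← sub_eq_zero, map_dynMap_sub hσ ha hc hn hn0, hS, mul_zero, zero_mul, neg_zero]
    refine hX0 (eq_of_mem_periodicPts_of_iterate_eq hX h0 (k := 2) ?_)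
    rw [iterate_succ_apply', iterate_one, hfix _ hfX]
  · exact hX0 (eq_of_mem_periodicPts_of_iterate_eq hX h0 (k := 1)
      (hfix X (sub_eq_zero.mp ((pow_eq_zero_iff hn0).mp hD))))

theorem hanging_depth_dynMap_of_semiconj [Finite F] {G : Type*} [CommGroup G]
    (hσ : Involutive σ) (ha : σ a = a) (hc : σ c = c) (hn : Even n) (hn0 : n ≠ 0)
    (h2 : (2 : F) ≠ 0) (hac : a + c ≠ 0) (hca : c - a ≠ 0) {ι : G → F} (hιinj : Injective ι)
    (hrange : ∀ t, t ∈ range ι ↔ t ≠ 0 ∧ σ t = t) {C : G}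
    (hι : Semiconj ι (powAffine C n) fun t => (c - a) * (a + c) ^ n * t ^ n) {e : ℕ}
    (hinj : InjOn (powAffine C n) (range (powAffine C n)^[e + 1]))
    (hdeep : ∀ t ∈ range (powAffine C n)^[e + 1], ∃ t' ∈ range (powAffine C n)^[e],
      t' ∉ range (powAffine C n)^[e + 1] ∧ powAffine C n t' = t)
    {X₀ : F} (hX₀ : X₀ ≠ 0) (hper : X₀ ∈ periodicPts (dynMap σ a c n)) :
    (∃ Y, (dynMap σ a c n)^[e + 1] Y = X₀ ∧
        ∀ i < e + 1, (dynMap σ a c n)^[i] Y ∉ periodicPts (dynMap σ a c n)) ∧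
      ∀ k Y, (dynMap σ a c n)^[k] Y = X₀ →
        (∀ i < k, (dynMap σ a c n)^[i] Y ∉ periodicPts (dynMap σ a c n)) → k ≤ e + 1 := by
  have hu : Semiconj (dynProj σ n) (dynMap σ a c n) fun t => (c - a) * (a + c) ^ n * t ^ n :=
    dynProj_dynMap hσ ha hc hn hn0
  have hfib : ∀ P Q, dynProj σ n P ∈ range ι → dynProj σ n P = dynProj σ n Q →
      dynMap σ a c n P = dynMap σ a c n Q → P = Q := fun P Q hP =>
    eq_of_dynMap_eq hσ ha hc hn hn0 h2 hac hca ((hrange _).mp hP).1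
  have hlift : ∀ Z z, dynProj σ n Z = ι (powAffine C n z) →
      ∃ W, dynMap σ a c n W = Z ∧ dynProj σ n W = ι z := fun Z z hZ =>
    exists_dynMap_eq hσ ha hc hn hn0 h2 hac hca ((hrange _).mp (mem_range_self z)).2
      ((hrange _).mp (mem_range_self z)).1 ((hι z).symm.trans hZ.symm)
  have hback : ∀ X, dynProj σ n (dynMap σ a c n X) ∈ range ι → dynProj σ n X ∈ range ι := by
    intro X hX
    rw [hu.eq, hrange] at hX
    exact (hrange _).mpr ⟨fun h => hX.1 (by rw [h, zero_pow hn0, mul_zero]), map_dynProj hσ hn X⟩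
  obtain ⟨z₀, hz₀⟩ := (hrange _).mpr
    ⟨dynProj_ne_zero_of_mem_periodicPts hσ ha hc hn hn0 hper hX₀, map_dynProj hσ hn X₀⟩
  exact ⟨exists_iterate_eq_forall_not_mem_periodicPts hu hι hιinj hlift hdeep hper hz₀.symm,
    fun k Y hY => le_of_forall_not_mem_periodicPts hu hι hιinj hfib hback hinj (hY ▸ ⟨z₀, hz₀⟩)⟩

end Involution

section FiniteField

variable {F : Type*} [Field F]

theorem mem_range_rootsOfUnity_iff {q : ℕ} (hq : q ≠ 0) {t : F} :
    t ∈ range (fun x : rootsOfUnity (q - 1) F => ((x : Fˣ) : F)) ↔ t ≠ 0 ∧ t ^ q = t := by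
  constructor
  · rintro ⟨x, rfl⟩
    refine ⟨Units.ne_zero _, ?_⟩
    rw [← pow_sub_one_mul hq, ← Units.val_pow_eq_pow_val, (mem_rootsOfUnity _ _).mp x.2,
      Units.val_one, one_mul]
  · rintro ⟨ht0, htq⟩
    refine ⟨⟨Units.mk0 t ht0, (mem_rootsOfUnity _ _).mpr (Units.ext ?_)⟩, rfl⟩
    exact mul_right_cancel₀ ht0 (by rw [Units.val_pow_eq_pow_val, Units.val_mk0,
      pow_sub_one_mul hq, htq, Units.val_one, one_mul])

theorem exists_orderOf_rootsOfUnity_eq [Fintype F] {q : ℕ} (hF : Fintype.card F = q ^ 2) :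
    ∃ ζ : rootsOfUnity (q - 1) F, orderOf ζ = q - 1 := by
  obtain ⟨g, hg⟩ := IsCyclic.exists_ofOrder_eq_natCard (α := Fˣ)
  have hcard : orderOf g = (q + 1) * (q - 1) := by
    rw [hg, Nat.card_units, Nat.card_eq_fintype_card, hF, ← Nat.sq_sub_sq, one_pow]
  have hord : orderOf (g ^ (q + 1)) = q - 1 := by
    rw [orderOf_pow_of_dvd (by omega) (hcard ▸ dvd_mul_right _ _), hcard,
      Nat.mul_div_cancel_left _ (by omega)]
  exact ⟨⟨g ^ (q + 1), (mem_rootsOfUnity _ _).mpr (hord ▸ pow_orderOf_eq_one _)⟩,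
    (Subgroup.orderOf_mk _ _).trans hord⟩

theorem hanging_depth_dynMap [Fintype F] {q : ℕ} (hF : Fintype.card F = q ^ 2) (σ : F →+* F)
    (hσ : ∀ x, σ x = x ^ q) (h2 : (2 : F) ≠ 0) {a c : F} (ha : σ a = a) (hc : σ c = c)
    (hac : a ^ 2 ≠ c ^ 2) {n : ℕ} (hn : Even n) (hn0 : n ≠ 0) {e : ℕ}
    (hstab : Nat.gcd (n ^ (e + 2)) (q - 1) ∣ n ^ (e + 1))
    (hstrict : Nat.gcd (n ^ e) (q - 1) < Nat.gcd (n ^ (e + 1)) (q - 1)) {X₀ : F} (hX₀ : X₀ ≠ 0)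
    (hper : X₀ ∈ periodicPts (dynMap σ a c n)) :
    (∃ Y, (dynMap σ a c n)^[e + 1] Y = X₀ ∧
        ∀ i < e + 1, (dynMap σ a c n)^[i] Y ∉ periodicPts (dynMap σ a c n)) ∧
      ∀ k Y, (dynMap σ a c n)^[k] Y = X₀ →
        (∀ i < k, (dynMap σ a c n)^[i] Y ∉ periodicPts (dynMap σ a c n)) → k ≤ e + 1 := by
  have hq : 1 < q := (Nat.one_lt_pow_iff two_ne_zero).mp (hF ▸ Fintype.one_lt_card)
  have hinv : Involutive σ := fun x => by
    rw [hσ, hσ, ← pow_mul, ← sq, ← hF, FiniteField.pow_card]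
  have hca : c - a ≠ 0 := sub_ne_zero.mpr fun h => hac (by rw [h])
  have hac' : a + c ≠ 0 := fun h => hac (by rw [eq_neg_of_add_eq_zero_left h, neg_sq])
  have hrange : ∀ t, t ∈ range (fun x : rootsOfUnity (q - 1) F => ((x : Fˣ) : F)) ↔
      t ≠ 0 ∧ σ t = t := fun t => by
    rw [mem_range_rootsOfUnity_iff (by omega), hσ]
  obtain ⟨C, hC⟩ := (hrange ((c - a) * (a + c) ^ n)).mpr
    ⟨mul_ne_zero hca (pow_ne_zero _ hac'), by
      simp only [map_mul, map_pow, map_sub, map_add, ha, hc]⟩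
  have hN : ∀ x : rootsOfUnity (q - 1) F, x ^ (q - 1) = 1 := fun x =>
    Subtype.ext ((mem_rootsOfUnity _ _).mp x.2)
  obtain ⟨ζ, hζ⟩ := exists_orderOf_rootsOfUnity_eq hF
  refine hanging_depth_dynMap_of_semiconj hinv ha hc hn hn0 h2 hac' hca
    (fun x y h => Subtype.ext (Units.ext h)) hrange (C := C) (fun x => ?_)
    (injOn_powAffine hN hstab)
    (fun t ht => exists_powAffine_eq_of_mem_range hN (by omega) hζ hstab hstrict ht) hX₀ hper
  simp only [powAffine, Subgroup.coe_mul, Subgroup.coe_pow, Units.val_mul, Units.val_pow_eq_pow_val,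
    hC]

end FiniteField

theorem stmt_10_general (p m q : ℕ) (hp : p.Prime) (hpodd : p ≠ 2) (hm : 0 < m) (hq : q = p ^ m)
    (F : Type*) [Field F] [Fintype F] (hF : Fintype.card F = q ^ 2)
    (a c : F) (ha : a ^ q = a) (hc : c ^ q = c)
    (n : ℕ) (hn2 : 2 ≤ n) (hneven : Even n)
    (hac : a ^ 2 ≠ c ^ 2)
    (f : F → F) (hf : ∀ X, f X = (c * X ^ q + a * X) * (X ^ q - X) ^ (n - 1))
    (r s : ℕ) (hrcop : Nat.Coprime r n)
    (hsr : q - 1 = s * r)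
    (e : ℕ) (he : Nat.gcd (n ^ e) (q - 1) < s)
    (hemax : ∀ e' : ℕ, Nat.gcd (n ^ e') (q - 1) < s → e' ≤ e)
    (Periodic : F → Prop) (hPer : ∀ X : F, Periodic X ↔ ∃ k : ℕ, 1 ≤ k ∧ f^[k] X = X)
    (Hangs : ℕ → F → F → Prop)
    (hHangs : ∀ (k : ℕ) (Y X₀ : F),
      Hangs k Y X₀ ↔ f^[k] Y = X₀ ∧ ∀ i : ℕ, i < k → ¬ Periodic (f^[i] Y)) :
    ∀ X₀ : F, X₀ ≠ 0 → Periodic X₀ →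
      (∃ Y : F, Hangs (e + 1) Y X₀) ∧
      (∀ (k : ℕ) (Y : F), Hangs k Y X₀ → k ≤ e + 1) := by
  intro X₀ hX₀ hX₀per
  subst hq
  have hs : s ≠ 0 := by
    rintro rfl
    have := Nat.one_lt_pow hm.ne' hp.one_lt
    omega
  have h1 := Nat.gcd_pow_eq_of_lt hrcop hsr hs hemax (k := e + 1) (by omega)
  have h2 := Nat.gcd_pow_eq_of_lt hrcop hsr hs hemax (k := e + 2) (by omega)
  have : Fact p.Prime := ⟨hp⟩
  have : CharP F p := charP_of_card_eq_prime_pow (hF.trans (pow_mul p m 2).symm)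
  have hPer' : ∀ X, Periodic X ↔ X ∈ periodicPts f := hPer
  obtain rfl : f = dynMap (iterateFrobenius F p m) a c n := funext hf
  simp only [hHangs, hPer', and_imp]
  exact hanging_depth_dynMap hF _ (fun _ => rfl) (Ring.two_ne_zero (by rwa [ringChar.eq F p]))
    ha hc hac hneven (by omega) (by rw [h2, ← h1]; exact Nat.gcd_dvd_left _ _)
    (by rwa [h1]) hX₀ ((hPer' X₀).mp hX₀per)

/-- `n` even, `n ≥ 2`, `a² ≠ c²`. For every nonzero periodic point `X₀`,
the maximum depth at which some `Y` hangs from `X₀` is exactly `e + 1`, where `e` is the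
largest integer with `𝔤(nᵉ) < s`. -/
theorem stmt_10 (p m q : ℕ) (hp : p.Prime) (hpodd : p ≠ 2) (hm : 0 < m) (hq : q = p ^ m)
    (F : Type*) [Field F] [Fintype F] (hF : Fintype.card F = q ^ 2)
    (a c : F) (ha : a ^ q = a) (hc : c ^ q = c)
    (n : ℕ) (hn2 : 2 ≤ n) (hneven : Even n)
    (hac : a ^ 2 ≠ c ^ 2)
    (f : F → F) (hf : ∀ X, f X = (c * X ^ q + a * X) * (X ^ q - X) ^ (n - 1))
    (r s : ℕ) (hrdvd : r ∣ q - 1) (hrcop : Nat.Coprime r n)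
    (hrmax : ∀ r' : ℕ, r' ∣ q - 1 → Nat.Coprime r' n → r' ≤ r)
    (hsr : q - 1 = s * r)
    (e : ℕ) (he : Nat.gcd (n ^ e) (q - 1) < s)
    (hemax : ∀ e' : ℕ, Nat.gcd (n ^ e') (q - 1) < s → e' ≤ e)
    (Periodic : F → Prop) (hPer : ∀ X : F, Periodic X ↔ ∃ k : ℕ, 1 ≤ k ∧ f^[k] X = X)
    (Hangs : ℕ → F → F → Prop)
    (hHangs : ∀ (k : ℕ) (Y X₀ : F),
      Hangs k Y X₀ ↔ f^[k] Y = X₀ ∧ ∀ i : ℕ, i < k → ¬ Periodic (f^[i] Y)) :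
    ∀ X₀ : F, X₀ ≠ 0 → Periodic X₀ →
      (∃ Y : F, Hangs (e + 1) Y X₀) ∧
      (∀ (k : ℕ) (Y : F), Hangs k Y X₀ → k ≤ e + 1) :=
  stmt_10_general p m q hp hpodd hm hq F hF a c ha hc n hn2 hneven hac f hf r s hrcop hsr e he hemax
    Periodic hPer Hangs hHangs
end

section
/- Assume n is odd, n ≥ 3, and a = −c ≠ 0 (so a + c = 0 and a − c ≠ 0). If X ∈ F_{q^2} satisfies X^q ≠ X and f^(j)(X) = X for some integer j ≥ 1, then τ0 divides j. -/
/-!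
Write `T Z = Z ^ q - Z`. As `a, c ∈ 𝔽_q` and `n - 1` is even, `T (f Z) = (a - c) * T Z ^ n`, so
`T (f^[j] X) = (a - c) ^ E * T X ^ n ^ j` with `E = 1 + n + ⋯ + n ^ (j - 1)`, and a fixed point
`X ∉ 𝔽_q` forces `((a - c) * T X ^ (n - 1)) ^ E = 1`. Since `T X` and `β` are both negated by
Frobenius, `T X = 2 β v` with `v = α ^ r ∈ 𝔽_q^*`, whence
`(a - c) * T X ^ (n - 1) = α ^ (l0 + r (n - 1))` and `q - 1 ∣ E * (l0 + r (n - 1))`.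
Lifting the exponent computes `ν_ℓ E` for the primes `ℓ ∣ n - 1` (`ν_ℓ E = ν_ℓ j` for odd `ℓ`,
`ν_2 E = ν_2 (n + 1) + ν_2 j - 1` for even `j`), while `ν_ℓ (l0 + r (n - 1)) ≤ ν_ℓ l0` as soon as
`ν_ℓ l0 < ν_ℓ (n - 1)`; together these give `τ0 ∣ j`.
-/

open Finset Function

section GeomSum

variable {n j : ℕ}

lemma geomSum_mul_sub_one_add_one (hn : 1 ≤ n) (j : ℕ) :
    (∑ i ∈ range j, n ^ i) * (n - 1) + 1 = n ^ j := by
  simpa [Nat.sub_add_cancel hn] using geom_sum_mul_add (n - 1) j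

lemma geomSum_ne_zero (hj : j ≠ 0) : ∑ i ∈ range j, n ^ i ≠ 0 :=
  (geom_sum_pos (Nat.zero_le n) hj).ne'

lemma padicValNat_geomSum_add_padicValNat_sub_one (ℓ : ℕ) [Fact ℓ.Prime] (h1 : 1 < n)
    (hj : j ≠ 0) :
    padicValNat ℓ (∑ i ∈ range j, n ^ i) + padicValNat ℓ (n - 1) =
      padicValNat ℓ (n ^ j - 1) := by
  rw [← geomSum_mul_sub_one_add_one h1.le j, Nat.add_sub_cancel,
    padicValNat.mul (geomSum_ne_zero hj) (by omega)]

lemma padicValNat_geomSum_of_odd {ℓ : ℕ} [Fact ℓ.Prime] (hℓ : Odd ℓ) (h1 : 1 < n)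
    (hℓn : ℓ ∣ n - 1) (hj : j ≠ 0) :
    padicValNat ℓ (∑ i ∈ range j, n ^ i) = padicValNat ℓ j := by
  have hℓ_n : ¬ ℓ ∣ n := fun h ↦ (Fact.out : ℓ.Prime).one_lt.ne'
    (Nat.dvd_one.mp (by simpa [Nat.sub_sub_self h1.le] using Nat.dvd_sub h hℓn))
  have lte := padicValNat.pow_sub_pow hℓ h1 (by simpa using hℓn) (by simpa using hℓ_n) hj
  rw [one_pow, ← padicValNat_geomSum_add_padicValNat_sub_one ℓ h1 hj] at lte
  omega

lemma padicValNat_two_geomSum (hn : Odd n) (h1 : 1 < n) (hj : j ≠ 0) (hje : Even j) :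
    padicValNat 2 (∑ i ∈ range j, n ^ i) + 1 = padicValNat 2 (n + 1) + padicValNat 2 j := by
  have lte := padicValNat.pow_two_sub_one h1 (by simpa [← even_iff_two_dvd] using hn) hj hje
  rw [← padicValNat_geomSum_add_padicValNat_sub_one 2 h1 hj] at lte
  omega

lemma geomSum_mod_two (hn : Odd n) (j : ℕ) : (∑ i ∈ range j, n ^ i) % 2 = j % 2 := by
  rw [Finset.sum_nat_mod, Finset.sum_congr rfl fun i _ ↦ Nat.odd_iff.mp (hn.pow (n := i))]
  simp

end GeomSum

lemma padicValNat_le_of_dvd (p : ℕ) {a b : ℕ} [Fact p.Prime] (hb : b ≠ 0) (h : a ∣ b) :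
    padicValNat p a ≤ padicValNat p b :=
  (padicValNat_dvd_iff_le hb).1 (pow_padicValNat_dvd.trans h)

lemma padicValNat_lt_of_mem_primeFactors_div_gcd {ℓ m l : ℕ}
    (h : ℓ ∈ (m / m.gcd l).primeFactors) : padicValNat ℓ l < padicValNat ℓ m := by
  obtain ⟨hℓ, hdvd_quot, hquot⟩ := Nat.mem_primeFactors.1 h
  have : Fact ℓ.Prime := ⟨hℓ⟩
  have hm : m ≠ 0 := by rintro rfl; simp at hquot
  have hgcd : m.gcd l ≠ 0 := Nat.gcd_ne_zero_left hm
  by_contra! hle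
  have hdvd : ℓ ^ padicValNat ℓ m ∣ m.gcd l :=
    Nat.dvd_gcd pow_padicValNat_dvd ((pow_dvd_pow ℓ hle).trans pow_padicValNat_dvd)
  have hval := one_le_padicValNat_of_dvd hquot hdvd_quot
  rw [padicValNat.div_of_dvd (Nat.gcd_dvd_left m l)] at hval
  have := (padicValNat_dvd_iff_le hgcd).1 hdvd
  omega

lemma Finset.prod_prime_pow_dvd {s : Finset ℕ} {e : ℕ → ℕ} {j : ℕ} (hs : ∀ ℓ ∈ s, ℓ.Prime)
    (h : ∀ ℓ ∈ s, ℓ ^ e ℓ ∣ j) : ∏ ℓ ∈ s, ℓ ^ e ℓ ∣ j := by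
  have hcop : (s : Set ℕ).Pairwise (IsCoprime on fun ℓ ↦ ((ℓ ^ e ℓ : ℕ) : ℤ)) :=
    fun ℓ hℓ ℓ' hℓ' hne ↦ Nat.isCoprime_iff_coprime.2
      (((Nat.coprime_primes (hs ℓ hℓ) (hs ℓ' hℓ')).2 hne).pow _ _)
  exact_mod_cast Finset.prod_dvd_of_coprime hcop fun ℓ hℓ ↦ Int.natCast_dvd_natCast.2 (h ℓ hℓ)

section Valuations

variable {Q n l r j : ℕ}

lemma two_pow_dvd_of_dvd_geomSum_mul (hn : Odd n) (h1 : 1 < n) (hl : Odd l) (hj : j ≠ 0)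
    (h : Q ∣ (∑ i ∈ range j, n ^ i) * (l + r * (n - 1))) :
    2 ^ (padicValNat 2 Q - padicValNat 2 ((n + 1) / 2)) ∣ j := by
  set E := ∑ i ∈ range j, n ^ i
  set K := l + r * (n - 1)
  have hK : Odd K := hl.add_even ((Nat.Odd.sub_odd hn odd_one).mul_left r)
  rcases Nat.even_or_odd j with hje | hjo
  · have hQ := padicValNat_le_of_dvd 2 (mul_ne_zero (geomSum_ne_zero hj) hK.pos.ne') h
    rw [padicValNat.mul (geomSum_ne_zero hj) hK.pos.ne',
      padicValNat.eq_zero_of_not_dvd (n := K) (by simpa [← even_iff_two_dvd] using hK)] at hQ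
    have hE := padicValNat_two_geomSum hn h1 hj hje
    have hhalf := padicValNat.div (p := 2) (b := n + 1) (even_iff_two_dvd.1 (hn.add_one))
    have hpos := one_le_padicValNat_of_dvd (p := 2) (by omega) (even_iff_two_dvd.1 (hn.add_one))
    exact (padicValNat_dvd_iff_le hj).2 (by omega)
  · have hEK : Odd (E * K) := (Nat.odd_iff.2 (by rw [geomSum_mod_two hn, Nat.odd_iff.1 hjo])).mul hK
    have hQ : ¬ 2 ∣ Q := fun h2 ↦ (Nat.not_even_iff_odd.2 hEK) (even_iff_two_dvd.2 (h2.trans h))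
    simp [padicValNat.eq_zero_of_not_dvd hQ]

lemma pow_dvd_of_dvd_geomSum_mul {ℓ : ℕ} [Fact ℓ.Prime] (hℓ : Odd ℓ) (h1 : 1 < n) (hl : l ≠ 0)
    (hj : j ≠ 0) (hlt : padicValNat ℓ l < padicValNat ℓ (n - 1))
    (h : Q ∣ (∑ i ∈ range j, n ^ i) * (l + r * (n - 1))) :
    ℓ ^ (padicValNat ℓ Q - padicValNat ℓ l) ∣ j := by
  set K := l + r * (n - 1)
  have hK : K ≠ 0 := by positivity
  have hKl : padicValNat ℓ K ≤ padicValNat ℓ l := by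
    by_contra! hlK
    have hn : ℓ ^ (padicValNat ℓ l + 1) ∣ r * (n - 1) :=
      ((pow_dvd_pow ℓ hlt).trans pow_padicValNat_dvd).mul_left r
    exact pow_succ_padicValNat_not_dvd hl
      ((Nat.dvd_add_left hn).1 ((pow_dvd_pow ℓ hlK).trans pow_padicValNat_dvd))
  have hQ := padicValNat_le_of_dvd ℓ (mul_ne_zero (geomSum_ne_zero hj) hK) h
  rw [padicValNat.mul (geomSum_ne_zero hj) hK, padicValNat_geomSum_of_odd hℓ h1
    (dvd_of_one_le_padicValNat (by omega)) hj] at hQ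
  exact (padicValNat_dvd_iff_le hj).2 (by omega)

end Valuations

lemma two_pow_mul_prod_dvd_of_dvd_geomSum_mul {Q n l r j ε : ℕ} (hn : Odd n) (h1 : 1 < n)
    (hj : j ≠ 0) (hgcd : Nat.gcd (n - 1) l ≠ n - 1) (hε_even : Even l → ε = 0)
    (hε_odd : Odd l → ε = padicValNat 2 Q - padicValNat 2 ((n + 1) / 2))
    (h : Q ∣ (∑ i ∈ range j, n ^ i) * (l + r * (n - 1))) :
    2 ^ ε * ∏ ℓ ∈ ((n - 1) / Nat.gcd (n - 1) l).primeFactors.erase 2,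
      ℓ ^ (padicValNat ℓ Q - padicValNat ℓ l) ∣ j := by
  have hl : l ≠ 0 := by rintro rfl; simp at hgcd
  have htwo : 2 ^ ε ∣ j := by
    rcases Nat.even_or_odd l with hle | hlo
    · simp [hε_even hle]
    · exact hε_odd hlo ▸ two_pow_dvd_of_dvd_geomSum_mul hn h1 hlo hj h
  have hodd : ∏ ℓ ∈ ((n - 1) / Nat.gcd (n - 1) l).primeFactors.erase 2,
      ℓ ^ (padicValNat ℓ Q - padicValNat ℓ l) ∣ j := by
    refine Finset.prod_prime_pow_dvd
      (fun ℓ hℓ ↦ Nat.prime_of_mem_primeFactors (mem_erase.1 hℓ).2) fun ℓ hℓ ↦ ?_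
    obtain ⟨hℓ2, hℓ⟩ := mem_erase.1 hℓ
    have hℓp : Fact ℓ.Prime := ⟨Nat.prime_of_mem_primeFactors hℓ⟩
    exact pow_dvd_of_dvd_geomSum_mul (hℓp.out.odd_of_ne_two hℓ2) h1 hl hj
      (padicValNat_lt_of_mem_primeFactors_div_gcd hℓ) h
  refine Nat.Coprime.mul_dvd_of_dvd_of_dvd ?_ htwo hodd
  refine Nat.Coprime.pow_left _ (Nat.Coprime.prod_right fun ℓ hℓ ↦ Nat.Coprime.pow_right _ ?_)
  obtain ⟨hℓ2, hℓ⟩ := mem_erase.1 hℓ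
  exact (Nat.coprime_primes Nat.prime_two (Nat.prime_of_mem_primeFactors hℓ)).2 (Ne.symm hℓ2)

section Iteration

variable {α M : Type*} {g : α → α} {T : α → M} {b : M} {n : ℕ}

lemma apply_iterate_eq_pow_geomSum_mul [CommMonoid M] (h : ∀ z, T (g z) = b * T z ^ n)
    (k : ℕ) (z : α) : T (g^[k] z) = b ^ (∑ i ∈ range k, n ^ i) * T z ^ n ^ k := by
  induction k with
  | zero => simp
  | succ k ih =>
    rw [iterate_succ_apply', h, ih, geom_sum_succ, pow_succ n k, mul_pow, ← pow_mul, ← pow_mul,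
      pow_succ', mul_comm n, mul_assoc]

lemma pow_geomSum_eq_one_of_iterate_eq [CommMonoidWithZero M] [IsCancelMulZero M]
    (h : ∀ z, T (g z) = b * T z ^ n) (hn : 1 ≤ n) {j : ℕ} {z : α} (hfix : g^[j] z = z)
    (hz : T z ≠ 0) : (b * T z ^ (n - 1)) ^ (∑ i ∈ range j, n ^ i) = 1 := by
  have hT := apply_iterate_eq_pow_geomSum_mul h j z
  rw [hfix, ← geomSum_mul_sub_one_add_one hn j, pow_succ, pow_mul'] at hT
  refine mul_left_cancel₀ hz ?_
  calc T z * (b * T z ^ (n - 1)) ^ (∑ i ∈ range j, n ^ i)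
      = b ^ (∑ i ∈ range j, n ^ i) * ((T z ^ (n - 1)) ^ (∑ i ∈ range j, n ^ i) * T z) := by
        rw [mul_pow]; ac_rfl
    _ = T z * 1 := by rw [← hT, mul_one]

end Iteration

section Involution

variable {R : Type*} [CommRing R] (σ : R →+* R)

lemma map_sub_self_of_involutive_s14 (hσ : Involutive σ) (x : R) : σ (σ x - x) = -(σ x - x) := by
  rw [map_sub, hσ x]
  ring

lemma map_sub_self_mul_pow_sub_self (hσ : Involutive σ) {a c : R} (ha : σ a = a)
    (hc : σ c = c) {m : ℕ} (hm : Even m) (Z : R) :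
    σ ((c * σ Z + a * Z) * (σ Z - Z) ^ m) - (c * σ Z + a * Z) * (σ Z - Z) ^ m =
      (a - c) * (σ Z - Z) ^ (m + 1) := by
  rw [map_mul, map_pow, map_sub_self_of_involutive_s14 σ hσ, hm.neg_pow, map_add, map_mul, map_mul,
    ha, hc, hσ Z]
  ring

end Involution

lemma exists_map_eq_self_sq_eq_four_mul {F : Type*} [Field F] (σ : F →+* F) (h2 : (2 : F) ≠ 0)
    {β Y : F} (hβ0 : β ≠ 0) (hβ : σ β = -β) (hY : σ Y = -Y) :
    ∃ v, σ v = v ∧ Y ^ 2 = 4 * β ^ 2 * v ^ 2 := by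
  refine ⟨Y / (2 * β), ?_, ?_⟩
  · rw [map_div₀, map_mul, map_ofNat, hY, hβ, mul_neg, neg_div_neg_eq]
  · field_simp
    ring

lemma exists_pow_eq_of_pow_eq_self {K : Type*} [CommRing K] [IsDomain K] {α v : K} {q : ℕ}
    (hq : 1 < q) (hα : orderOf α = q - 1) (hv0 : v ≠ 0) (hv : v ^ q = v) : ∃ r, α ^ r = v := by
  have : NeZero (q - 1) := ⟨by omega⟩
  have hv1 : v ^ (q - 1) = 1 :=
    mul_right_cancel₀ hv0 (by rw [← pow_succ, Nat.sub_add_cancel hq.le, hv, one_mul])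
  obtain ⟨r, -, hr⟩ := (hα ▸ IsPrimitiveRoot.orderOf α).eq_pow_of_pow_eq_one hv1
  exact ⟨r, hr⟩

lemma iterateFrobenius_involutive {F : Type*} [Field F] [Fintype F] {p s : ℕ} [ExpChar F p]
    (hF : Fintype.card F = (p ^ s) ^ 2) : Involutive (iterateFrobenius F p s) := fun x ↦ by
  rw [iterateFrobenius_def, iterateFrobenius_def, ← pow_mul, ← sq, ← hF, FiniteField.pow_card]

lemma exists_map_eq_self_pow_geomSum_eq_one {F : Type*} [Field F] (σ : F →+* F)
    (hσ : Involutive σ) (h2 : (2 : F) ≠ 0) {a c β : F} (ha : σ a = a) (hc : σ c = c)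
    (hβ0 : β ≠ 0) (hβ : σ β = -β) {n : ℕ} (hn : Odd n) {f : F → F}
    (hf : ∀ X, f X = (c * σ X + a * X) * (σ X - X) ^ (n - 1)) {X : F} (hX : σ X ≠ X) {j : ℕ}
    (hfix : f^[j] X = X) :
    ∃ v, σ v = v ∧ v ≠ 0 ∧
      ((4 * β ^ 2) ^ ((n - 1) / 2) * (a - c) * v ^ (n - 1)) ^ (∑ i ∈ range j, n ^ i) = 1 := by
  obtain ⟨m, rfl⟩ := hn
  have hY0 : σ X - X ≠ 0 := sub_ne_zero.2 hX
  obtain ⟨v, hvσ, hYv⟩ := exists_map_eq_self_sq_eq_four_mul σ h2 hβ0 hβ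
    (map_sub_self_of_involutive_s14 σ hσ X)
  refine ⟨v, hvσ, fun hv ↦ hY0 (by simpa [hv] using hYv), ?_⟩
  have hT (Z : F) : σ (f Z) - f Z = (a - c) * (σ Z - Z) ^ (2 * m + 1) := by
    simpa [hf] using map_sub_self_mul_pow_sub_self σ hσ ha hc (even_two_mul m) Z
  convert pow_geomSum_eq_one_of_iterate_eq (T := fun Z ↦ σ Z - Z) hT (Nat.le_add_left 1 (2 * m))
    hfix hY0 using 2
  rw [Nat.add_sub_cancel, Nat.mul_div_cancel_left m two_pos, pow_mul, pow_mul, hYv, mul_pow,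
    mul_pow]
  ring

theorem stmt_14_general (p s q : ℕ) (hp : p.Prime) (hpodd : p ≠ 2) (hs : 0 < s) (hq : q = p ^ s)
    (F : Type*) [Field F] [Fintype F] (hF : Fintype.card F = q ^ 2)
    (a c : F) (ha : a ^ q = a) (hc : c ^ q = c)
    (n : ℕ) (hn3 : 3 ≤ n) (hnodd : Odd n)
    (f : F → F) (hf : ∀ X, f X = (c * X ^ q + a * X) * (X ^ q - X) ^ (n - 1))
    (β : F) (hβ : β ^ q ≠ β) (hβsq : (β ^ 2) ^ q = β ^ 2)
    (α : F) (hαord : orderOf α = q - 1)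
    (l0 : ℕ) (hl0 : (4 * β ^ 2) ^ ((n - 1) / 2) * (a - c) = α ^ l0)
    (ε0 : ℕ)
    (hε0a : Even l0 → ε0 = 0)
    (hε0b : Odd l0 → ε0 = padicValNat 2 (q - 1) - padicValNat 2 ((n + 1) / 2))
    (τ0 : ℕ)
    (hτ0a : Nat.gcd (n - 1) l0 = n - 1 → τ0 = 1)
    (hτ0b : Nat.gcd (n - 1) l0 ≠ n - 1 →
      τ0 = 2 ^ ε0 *
        ∏ ℓ ∈ ((n - 1) / Nat.gcd (n - 1) l0).primeFactors.erase 2,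
          ℓ ^ (padicValNat ℓ (q - 1) - padicValNat ℓ l0)) :
    ∀ X : F, X ^ q ≠ X → ∀ j : ℕ, 1 ≤ j → f^[j] X = X → τ0 ∣ j := by
  intro X hX j hj hfix
  rcases eq_or_ne (Nat.gcd (n - 1) l0) (n - 1) with hgcd | hgcd
  · simp [hτ0a hgcd]
  rw [hτ0b hgcd]
  subst hq
  have : Fact p.Prime := ⟨hp⟩
  have : CharP F p := charP_of_card_eq_prime_pow (f := s * 2) (by rw [hF, pow_mul])
  have hσ := iterateFrobenius_involutive (p := p) (s := s) hF
  have h2 : (2 : F) ≠ 0 := Ring.two_ne_zero (ringChar.eq F p ▸ hpodd)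
  have hβ0 : β ≠ 0 := by rintro rfl; simp [zero_pow (pow_ne_zero s hp.ne_zero)] at hβ
  have hβneg : β ^ p ^ s = -β := by
    rw [← pow_mul, mul_comm, pow_mul, sq_eq_sq_iff_eq_or_eq_neg] at hβsq
    exact hβsq.resolve_left hβ
  obtain ⟨v, hvσ, hv0, hv⟩ := exists_map_eq_self_pow_geomSum_eq_one (iterateFrobenius F p s) hσ
    h2 ha hc hβ0 hβneg hnodd hf hX hfix
  obtain ⟨r, rfl⟩ := exists_pow_eq_of_pow_eq_self (Nat.one_lt_pow hs.ne' hp.one_lt) hαord hv0 hvσ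
  rw [hl0, ← pow_mul, ← pow_add, ← pow_mul] at hv
  exact two_pow_mul_prod_dvd_of_dvd_geomSum_mul hnodd (by omega) (by omega) hgcd hε0a hε0b
    (hαord ▸ orderOf_dvd_of_pow_eq_one (by rwa [mul_comm]))

/-- `n` odd, `n ≥ 3`, `a = -c ≠ 0`. If `X^q ≠ X` and `f^(j)(X) = X` for
some `j ≥ 1`, then `τ0 ∣ j`. -/
theorem stmt_14 (p s q : ℕ) (hp : p.Prime) (hpodd : p ≠ 2) (hs : 0 < s) (hq : q = p ^ s)
    (F : Type*) [Field F] [Fintype F] (hF : Fintype.card F = q ^ 2)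
    (a c : F) (ha : a ^ q = a) (hc : c ^ q = c)
    (n : ℕ) (hn3 : 3 ≤ n) (hnodd : Odd n)
    (hac : a = -c) (hc0 : c ≠ 0)
    (f : F → F) (hf : ∀ X, f X = (c * X ^ q + a * X) * (X ^ q - X) ^ (n - 1))
    (β : F) (hβ : β ^ q ≠ β) (hβsq : (β ^ 2) ^ q = β ^ 2)
    (α : F) (hαq : α ^ q = α) (hα0 : α ≠ 0) (hαord : orderOf α = q - 1)
    (l0 : ℕ) (hl0 : (4 * β ^ 2) ^ ((n - 1) / 2) * (a - c) = α ^ l0)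
    (hl0min : ∀ m : ℕ, (4 * β ^ 2) ^ ((n - 1) / 2) * (a - c) = α ^ m → l0 ≤ m)
    (ε0 : ℕ)
    (hε0a : Even l0 → ε0 = 0)
    (hε0b : Odd l0 → ε0 = padicValNat 2 (q - 1) - padicValNat 2 ((n + 1) / 2))
    (τ0 : ℕ)
    (hτ0a : Nat.gcd (n - 1) l0 = n - 1 → τ0 = 1)
    (hτ0b : Nat.gcd (n - 1) l0 ≠ n - 1 →
      τ0 = 2 ^ ε0 *
        ∏ ℓ ∈ ((n - 1) / Nat.gcd (n - 1) l0).primeFactors.erase 2,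
          ℓ ^ (padicValNat ℓ (q - 1) - padicValNat ℓ l0)) :
    ∀ X : F, X ^ q ≠ X → ∀ j : ℕ, 1 ≤ j → f^[j] X = X → τ0 ∣ j :=
  stmt_14_general p s q hp hpodd hs hq F hF a c ha hc n hn3 hnodd f hf β hβ hβsq α hαord l0 hl0 ε0
    hε0a hε0b τ0 hτ0a hτ0b
end
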